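/- arXiv:1810.08334 — 9 statements merged into one kernel-verified Lean document; each statement's English description precedes it below -/
import Mathlib

section
/- For every integer n ≥ 1 there exists a continuous function ρ_n : ℝ → [0,∞) whose support is contained in the open interval (a_n, a_{n−1}), such that ∫_ℝ ρ_n(z) dz = 1 and ρ_n(r) ≤ 2/(n r) for every r > 0. -/
open MeasureTheory

/-- The sequence `a n = exp(-n(n+1)/2)`. -/
noncomputable def a (n : ℕ) : ℝ := Real.exp (-((n : ℝ) * ((n : ℝ) + 1)) / 2)

theorem stmt_1 (n : ℕ) (hn : 1 ≤ n) :
    ∃ ρ : ℝ → ℝ, Continuous ρ ∧ (∀ r, 0 ≤ ρ r) ∧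
      Function.support ρ ⊆ Set.Ioo (a n) (a (n - 1)) ∧
      (∫ z, ρ z) = 1 ∧
      ∀ r : ℝ, 0 < r → ρ r ≤ 2 / (n * r) := by
  set N : ℝ := (n : ℝ) with hNdef
  have hN1 : (1 : ℝ) ≤ N := by rw [hNdef]; exact_mod_cast hn
  have hN0 : (0 : ℝ) < N := by linarith
  set L0 : ℝ := -((n : ℝ) * ((n : ℝ) + 1)) / 2 with hL0def
  set L1 : ℝ := L0 + N with hL1def
  have hL01 : L0 < L1 := by simp [hL1def]; linarith
  set c : ℝ := Real.exp L0 / 2 with hcdef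
  have hc0 : 0 < c := by positivity
  have hcE : c < Real.exp L0 := by
    have := Real.exp_pos L0; rw [hcdef]; linarith
  set g : ℝ → ℝ := fun u => 4 / N ^ 2 * max 0 (min (u - L0) (L1 - u)) with hgdef
  set t : ℝ → ℝ := fun r => Real.log (max r c) with htdef
  set ρ : ℝ → ℝ := fun r => g (t r) / r with hρdef
  have hgnn : ∀ u, 0 ≤ g u := fun u =>
    mul_nonneg (by positivity) (le_max_left _ _)
  have hgcont : Continuous g := by
    apply continuous_const.mul
    exact continuous_const.max ((continuous_id.sub continuous_const).min
      (continuous_const.sub continuous_id))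
  have hmaxpos : ∀ r : ℝ, 0 < max r c := fun r => lt_of_lt_of_le hc0 (le_max_right r c)
  have htcont : Continuous t := by
    rw [continuous_iff_continuousAt]
    intro x
    exact ((continuous_id.max continuous_const).log
      (fun x => (hmaxpos x).ne')).continuousAt
  have hvan : ∀ r : ℝ, r < Real.exp L0 → g (t r) = 0 := by
    intro r hr
    have hm : max r c < Real.exp L0 := max_lt hr hcE
    have ht : t r < L0 := by
      rw [htdef]
      exact (Real.log_lt_iff_lt_exp (hmaxpos r)).2 hm
    have : min (t r - L0) (L1 - t r) ≤ 0 :=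
      le_trans (min_le_left _ _) (by linarith)
    rw [hgdef]
    simp only
    rw [max_eq_left this, mul_zero]
  -- continuity of ρ
  have hρcont : Continuous ρ := by
    rw [continuous_iff_continuousAt]
    intro x
    rcases eq_or_ne x 0 with rfl | hx
    · have hmem : Set.Ioo (-(Real.exp L0)) (Real.exp L0) ∈ nhds (0 : ℝ) :=
        Ioo_mem_nhds (neg_lt_zero.2 (Real.exp_pos L0)) (Real.exp_pos L0)
      have hev : ρ =ᶠ[nhds (0:ℝ)] fun _ => 0 := by
        filter_upwards [hmem] with r hr
        rw [hρdef]; simp only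
        rw [hvan r hr.2, zero_div]
      exact continuousAt_const.congr hev.symm
    · exact ((hgcont.comp htcont).continuousAt).div continuousAt_id hx
  have hρnn : ∀ r, 0 ≤ ρ r := by
    intro r
    rcases le_or_gt r 0 with hr | hr
    · rw [hρdef]; simp only
      rw [hvan r (lt_of_le_of_lt hr (Real.exp_pos L0)), zero_div]
    · exact div_nonneg (hgnn _) hr.le
  have ha0 : a n = Real.exp L0 := rfl
  have ha1 : a (n - 1) = Real.exp L1 := by
    unfold a
    congr 1
    push_cast [Nat.cast_sub hn]
    rw [hL1def, hL0def]; ring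
  have hsupp : Function.support ρ ⊆ Set.Ioo (Real.exp L0) (Real.exp L1) := by
    intro r hr
    have h1 : g (t r) ≠ 0 := by
      intro h; apply hr; rw [hρdef]; simp only [h, zero_div]
    have hmin : 0 < min (t r - L0) (L1 - t r) := by
      by_contra h
      push_neg at h
      apply h1
      rw [hgdef]; simp only
      rw [max_eq_left h, mul_zero]
    have h2 : L0 < t r := by
      have := lt_of_lt_of_le hmin (min_le_left _ _); linarith
    have h3 : t r < L1 := by
      have := lt_of_lt_of_le hmin (min_le_right _ _); linarith
    have h4 : Real.exp L0 < max r c := by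
      rw [htdef] at h2
      exact (Real.lt_log_iff_exp_lt (hmaxpos r)).1 h2
    have h5 : c < r := by
      by_contra h
      push_neg at h
      rw [max_eq_right h] at h4
      linarith
    have h6 : max r c = r := max_eq_left h5.le
    rw [h6] at h4
    have h7 : r < Real.exp L1 := by
      have h3' : Real.log r < L1 := by
        have : t r = Real.log r := by rw [htdef]; simp only [h6]
        rw [this] at h3; exact h3
      exact (Real.log_lt_iff_lt_exp (lt_trans (Real.exp_pos L0) h4)).1 h3'
    exact ⟨h4, h7⟩
  -- the bound
  have hbound : ∀ r : ℝ, 0 < r → ρ r ≤ 2 / (N * r) := by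
    intro r hr
    have hsum : (t r - L0) + (L1 - t r) = N := by rw [hL1def]; ring
    have hmax : max 0 (min (t r - L0) (L1 - t r)) ≤ N / 2 := by
      apply max_le (by linarith)
      have h1 := min_le_left (t r - L0) (L1 - t r)
      have h2 := min_le_right (t r - L0) (L1 - t r)
      linarith
    have hg2 : g (t r) ≤ 2 / N := by
      rw [hgdef]; simp only
      calc 4 / N ^ 2 * max 0 (min (t r - L0) (L1 - t r)) ≤ 4 / N ^ 2 * (N / 2) :=
            mul_le_mul_of_nonneg_left hmax (by positivity)
        _ = 2 / N := by field_simp; ring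
    show g (t r) / r ≤ 2 / (N * r)
    rw [← div_div]
    exact (div_le_div_iff_of_pos_right hr).2 hg2
  -- the integral
  have hEle : Real.exp L0 ≤ Real.exp L1 := Real.exp_le_exp.2 hL01.le
  have hint : (∫ z, ρ z) = 1 := by
    have step1 : (∫ z, ρ z) = ∫ z in Set.Ioo (Real.exp L0) (Real.exp L1), ρ z := by
      rw [← integral_indicator measurableSet_Ioo, Set.indicator_eq_self.2 hsupp]
    have step2 : (∫ z in Set.Ioo (Real.exp L0) (Real.exp L1), ρ z)
        = ∫ z in (Real.exp L0)..(Real.exp L1), ρ z := by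
      rw [intervalIntegral.integral_of_le hEle, integral_Ioc_eq_integral_Ioo]
    have step3 : (∫ z in (Real.exp L0)..(Real.exp L1), ρ z)
        = ∫ z in (Real.exp L0)..(Real.exp L1), z⁻¹ • g (Real.log z) := by
      apply intervalIntegral.integral_congr
      intro z hz
      rw [Set.uIcc_of_le hEle] at hz
      have hz0 : Real.exp L0 ≤ z := hz.1
      have hmz : max z c = z := max_eq_left (by linarith)
      rw [hρdef, htdef]; simp only [hmz]
      rw [smul_eq_mul, div_eq_inv_mul]
    have hderiv : ∀ x ∈ Set.uIcc (Real.exp L0) (Real.exp L1),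
        HasDerivAt Real.log x⁻¹ x := by
      intro x hx
      rw [Set.uIcc_of_le hEle] at hx
      exact Real.hasDerivAt_log (by nlinarith [Real.exp_pos L0, hx.1])
    have hinvcont : ContinuousOn (fun x : ℝ => x⁻¹)
        (Set.uIcc (Real.exp L0) (Real.exp L1)) := by
      apply ContinuousOn.inv₀ continuousOn_id
      intro x hx
      rw [Set.uIcc_of_le hEle] at hx
      have := Real.exp_pos L0
      simp only [id_eq]
      intro h; rw [h] at hx; linarith [hx.1]
    have step4 : (∫ z in (Real.exp L0)..(Real.exp L1), z⁻¹ • g (Real.log z))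
        = ∫ u in L0..L1, g u := by
      have := intervalIntegral.integral_comp_smul_deriv hderiv hinvcont hgcont
      rw [Real.log_exp, Real.log_exp] at this
      exact this
    set m : ℝ := L0 + N / 2 with hmdef
    have hL0m : L0 ≤ m := by rw [hmdef]; linarith
    have hmL1 : m ≤ L1 := by rw [hmdef, hL1def]; linarith
    have hi1 : IntervalIntegrable g volume L0 m := hgcont.intervalIntegrable _ _
    have hi2 : IntervalIntegrable g volume m L1 := hgcont.intervalIntegrable _ _
    have hsplit := intervalIntegral.integral_add_adjacent_intervals hi1 hi2
    have left1 : (∫ u in L0..m, g u) = ∫ u in L0..m, 4 / N ^ 2 * (u - L0) := by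
      apply intervalIntegral.integral_congr
      intro u hu
      rw [Set.uIcc_of_le hL0m] at hu
      rw [hgdef]; simp only
      rw [min_eq_left (by rw [hL1def]; rw [hmdef] at hu; linarith [hu.2]),
        max_eq_right (by linarith [hu.1])]
    have left2 : (∫ u in L0..m, 4 / N ^ 2 * (u - L0)) = 4 / N ^ 2 * ((N/2)^2/2) := by
      rw [intervalIntegral.integral_const_mul]
      congr 1
      rw [intervalIntegral.integral_comp_sub_right (fun x => x) L0]
      rw [integral_id]
      rw [hmdef]; ring_nf
    have right1 : (∫ u in m..L1, g u) = ∫ u in m..L1, 4 / N ^ 2 * (L1 - u) := by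
      apply intervalIntegral.integral_congr
      intro u hu
      rw [Set.uIcc_of_le hmL1] at hu
      rw [hgdef]; simp only
      rw [min_eq_right (by rw [hL1def]; rw [hmdef] at hu; linarith [hu.1]),
        max_eq_right (by rw [hL1def]; linarith [hu.2])]
    have right2 : (∫ u in m..L1, 4 / N ^ 2 * (L1 - u)) = 4 / N ^ 2 * ((N/2)^2/2) := by
      rw [intervalIntegral.integral_const_mul]
      congr 1
      rw [intervalIntegral.integral_comp_sub_left (fun x => x) L1]
      rw [integral_id]
      rw [hmdef, hL1def]; ring_nf
    rw [step1, step2, step3, step4, ← hsplit, left1, left2, right1, right2]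
    field_simp
    ring
  refine ⟨ρ, hρcont, hρnn, ?_, hint, ?_⟩
  · rw [ha0, ha1]; exact hsupp
  · intro r hr
    exact hbound r hr
end

section
/- Let n ≥ 1 be an integer and let ρ_n : ℝ → [0,∞) be a continuous function supported in (a_n, a_{n−1}) with ∫_ℝ ρ_n(z) dz = 1 and ρ_n(r) ≤ 2/(n r) for all r > 0. Define ψ_n(x) := ∫_0^{|x|} ∫_0^y ρ_n(z) dz dy for x ∈ ℝ. Then: (i) ψ_n is even and twice continuously differentiable on ℝ; (ii) ψ_n'(r) = ∫_0^r ρ_n(z) dz for r ≥ 0 and ψ_n'(−r) = −ψ_n'(r), so that |ψ_n'(r)| ≤ 1 and r·ψ_n'(r) ≥ 0 for all r; (iii) ψ_n''(r) = ρ_n(|r|) ≥ 0 and |r|·ψ_n''(r) ≤ 2/n for all r; (iv) ψ_n, ψ_n' and ψ_n'' all vanish on the interval [−a_n, a_n]; (v) 0 ≤ |r| − ψ_n(r) ≤ a_{n−1} for all r ∈ ℝ, and in particular ψ_n(r) → |r| as n → ∞; (vi) if ρ_{n+1} is any continuous function supported in (a_{n+1}, a_n) with integral 1 and ρ_{n+1}(r)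 ≤ 2/((n+1) r) for r > 0, and ψ_{n+1} is defined from ρ_{n+1} in the same way, then ψ_{n+1}(r) ≥ ψ_n(r) for every r ∈ ℝ. -/
open MeasureTheory

/-- A continuous nonnegative function supported in `(a n, a (n-1))`, with total
integral `1` and satisfying `ρ r ≤ 2/(n r)` for `r > 0`. -/
def IsMollifier (n : ℕ) (ρ : ℝ → ℝ) : Prop :=
  Continuous ρ ∧ (∀ r, 0 ≤ ρ r) ∧
    Function.support ρ ⊆ Set.Ioo (a n) (a (n - 1)) ∧
    (∫ z, ρ z) = 1 ∧ ∀ r : ℝ, 0 < r → ρ r ≤ 2 / (n * r)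

/-- `psi ρ x = ∫_0^{|x|} ∫_0^y ρ(z) dz dy`. -/
noncomputable def psi (ρ : ℝ → ℝ) (x : ℝ) : ℝ :=
  ∫ y in (0:ℝ)..|x|, ∫ z in (0:ℝ)..y, ρ z

/-!
Write `F = ∫₀^y ρ` and `G = ∫₀^x F`, so that `ψ(x) = G(|x|)`. Since `ρ` vanishes on `(-∞, a n]`,
so do `F` and `G`, hence `ψ(x) = G(x) + G(-x)` is a sum of two `C²` functions, with
`ψ' = F(x) - F(-x)` and `ψ'' = ρ(x) + ρ(-x) = ρ(|x|)`. As `ρ ≥ 0` has mass `1` in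
`(a n, a (n-1))`, `F` increases from `0` to `1` across that interval, so
`|x| - a (n-1) ≤ G(|x|) ≤ |x|`. Finally `F_n ≤ F_{n+1}` pointwise, because `F_n = 0` up to `a n`,
where `F_{n+1}` has already reached `1`.
-/

open Filter Topology Set

noncomputable def primitive (f : ℝ → ℝ) (y : ℝ) : ℝ := ∫ z in (0:ℝ)..y, f z

theorem psi_eq_primitive_primitive (ρ : ℝ → ℝ) (x : ℝ) :
    psi ρ x = primitive (primitive ρ) |x| := rfl

theorem psi_neg (ρ : ℝ → ℝ) (x : ℝ) : psi ρ (-x) = psi ρ x := by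
  rw [psi_eq_primitive_primitive, psi_eq_primitive_primitive, abs_neg]

section primitive

variable {f g : ℝ → ℝ} {b c y : ℝ}

theorem hasDerivAt_primitive (hf : Continuous f) (y : ℝ) :
    HasDerivAt (primitive f) (f y) y :=
  (hf.integral_hasStrictDerivAt 0 y).hasDerivAt

theorem deriv_primitive (hf : Continuous f) : deriv (primitive f) = f :=
  funext fun y => (hasDerivAt_primitive hf y).deriv

theorem differentiable_primitive (hf : Continuous f) : Differentiable ℝ (primitive f) :=
  fun y => (hasDerivAt_primitive hf y).differentiableAt

theorem continuous_primitive (hf : Continuous f) : Continuous (primitive f) :=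
  (differentiable_primitive hf).continuous

theorem contDiff_primitive {k : ℕ} (hf : ContDiff ℝ k f) : ContDiff ℝ (k + 1) (primitive f) := by
  rw [contDiff_succ_iff_deriv, deriv_primitive hf.continuous]
  exact ⟨differentiable_primitive hf.continuous, by simp, hf⟩

theorem primitive_eq_zero_of_le (hb : 0 ≤ b) (hf : ∀ z ≤ b, f z = 0) (hy : y ≤ b) :
    primitive f y = 0 := by
  rw [primitive, intervalIntegral.integral_congr (g := fun _ => 0), intervalIntegral.integral_zero]
  exact fun z hz => hf z (hz.2.trans (max_le hb hy))

theorem primitive_nonneg (hf : ∀ z, 0 ≤ z → 0 ≤ f z) (hy : 0 ≤ y) : 0 ≤ primitive f y :=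
  intervalIntegral.integral_nonneg hy fun z hz => hf z hz.1

theorem primitive_mono (hf : Continuous f) (hg : Continuous g) (hfg : f ≤ g) (hy : 0 ≤ y) :
    primitive f y ≤ primitive g y :=
  intervalIntegral.integral_mono_on hy (hf.intervalIntegrable _ _) (hg.intervalIntegrable _ _)
    fun z _ => hfg z

theorem primitive_le_self (hf : Continuous f) (hf1 : ∀ z, f z ≤ 1) (hy : 0 ≤ y) :
    primitive f y ≤ y := by
  simpa [primitive] using primitive_mono hf continuous_const hf1 hy

theorem sub_le_primitive (hf : Continuous f) (hf0 : ∀ z, 0 ≤ z → 0 ≤ f z)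
    (hf1 : ∀ z, c ≤ z → f z = 1) (hc : 0 ≤ c) (hy : 0 ≤ y) : y - c ≤ primitive f y := by
  rcases le_total y c with hyc | hcy
  · linarith [primitive_nonneg hf0 hy]
  have hsplit : primitive f y = primitive f c + ∫ z in c..y, f z :=
    (intervalIntegral.integral_add_adjacent_intervals (hf.intervalIntegrable _ _)
      (hf.intervalIntegrable _ _)).symm
  have htail : ∫ z in c..y, f z = y - c := by
    rw [intervalIntegral.integral_congr (g := fun _ => 1)]
    · simp
    · intro z hz
      exact hf1 z (uIcc_of_le hcy ▸ hz).1
  linarith [primitive_nonneg hf0 hc]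

theorem primitive_le_integral (hf : 0 ≤ f) (hfi : Integrable f) (hy : 0 ≤ y) :
    primitive f y ≤ ∫ z, f z := by
  rw [primitive, intervalIntegral.integral_of_le hy]
  exact setIntegral_le_integral hfi (Eventually.of_forall hf)

theorem primitive_eq_integral (hsupp : Function.support f ⊆ Ioc 0 c) (hc : 0 ≤ c) (hy : c ≤ y) :
    primitive f y = ∫ z, f z := by
  rw [primitive, intervalIntegral.integral_of_le (hc.trans hy)]
  refine setIntegral_eq_integral_of_forall_compl_eq_zero fun z hz => ?_
  by_contra hfz
  obtain ⟨hz0, hzc⟩ := hsupp hfz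
  exact hz ⟨hz0, hzc.trans hy⟩

end primitive

section psi

variable {ρ : ℝ → ℝ}

variable (hρ0 : ∀ z ≤ 0, ρ z = 0)
include hρ0

theorem primitive_primitive_eq_zero_of_nonpos {x : ℝ} (hx : x ≤ 0) :
    primitive (primitive ρ) x = 0 :=
  primitive_eq_zero_of_le le_rfl (fun _ hy => primitive_eq_zero_of_le le_rfl hρ0 hy) hx

theorem psi_eq_add_comp_neg :
    psi ρ = primitive (primitive ρ) + primitive (primitive ρ) ∘ Neg.neg := by
  ext x
  rw [psi_eq_primitive_primitive, Pi.add_apply, Function.comp_apply]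
  rcases le_total 0 x with hx | hx
  · rw [abs_of_nonneg hx, primitive_primitive_eq_zero_of_nonpos hρ0 (neg_nonpos.2 hx), add_zero]
  · rw [abs_of_nonpos hx, primitive_primitive_eq_zero_of_nonpos hρ0 hx, zero_add]

theorem apply_add_apply_neg_eq_apply_abs (x : ℝ) : ρ x + ρ (-x) = ρ |x| := by
  rcases le_total 0 x with hx | hx
  · rw [abs_of_nonneg hx, hρ0 (-x) (neg_nonpos.2 hx), add_zero]
  · rw [abs_of_nonpos hx, hρ0 x hx, zero_add]

variable (hρ : Continuous ρ)
include hρ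

theorem hasDerivAt_psi (x : ℝ) :
    HasDerivAt (psi ρ) (primitive ρ x - primitive ρ (-x)) x := by
  have hG := hasDerivAt_primitive (continuous_primitive hρ)
  have hsum := (hG x).add ((hG (-x)).comp x (hasDerivAt_neg x))
  rw [psi_eq_add_comp_neg hρ0]
  exact hsum.congr_deriv (by ring)

theorem deriv_psi : deriv (psi ρ) = primitive ρ - primitive ρ ∘ Neg.neg :=
  funext fun x => (hasDerivAt_psi hρ0 hρ x).deriv

theorem deriv_deriv_psi (x : ℝ) : deriv (deriv (psi ρ)) x = ρ |x| := by
  have hF := hasDerivAt_primitive hρ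
  have hdiff := (hF x).sub ((hF (-x)).comp x (hasDerivAt_neg x))
  rw [deriv_psi hρ0 hρ, hdiff.deriv, ← apply_add_apply_neg_eq_apply_abs hρ0]
  ring

theorem contDiff_psi : ContDiff ℝ 2 (psi ρ) := by
  have hG : ContDiff ℝ 2 (primitive (primitive ρ)) :=
    contDiff_primitive (k := 1) (contDiff_primitive (k := 0) (contDiff_zero.2 hρ))
  rw [psi_eq_add_comp_neg hρ0]
  exact hG.add (hG.comp contDiff_neg)

end psi

theorem a_pos (n : ℕ) : 0 < a n := Real.exp_pos _

theorem tendsto_a_atTop : Tendsto a atTop (𝓝 0) := by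
  refine Real.tendsto_exp_atBot.comp
    (Tendsto.atBot_div_const two_pos (tendsto_neg_atTop_atBot.comp ?_))
  exact tendsto_natCast_atTop_atTop.atTop_mul_atTop₀
    (tendsto_atTop_add_const_right _ 1 tendsto_natCast_atTop_atTop)

namespace IsMollifier

variable {n : ℕ} {ρ : ℝ → ℝ} {r y : ℝ} (h : IsMollifier n ρ)
include h

theorem continuous : Continuous ρ := h.1

theorem nonneg : 0 ≤ ρ := h.2.1

theorem integral_eq_one : ∫ z, ρ z = 1 := h.2.2.2.1

theorem support_subset_Ioc : Function.support ρ ⊆ Ioc 0 (a (n - 1)) :=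
  h.2.2.1.trans fun _ hz => ⟨(a_pos n).trans hz.1, hz.2.le⟩

theorem eq_zero_of_le (hz : y ≤ a n) : ρ y = 0 :=
  Function.notMem_support.1 fun hy => (h.2.2.1 hy).1.not_ge hz

theorem eq_zero_of_nonpos (hy : y ≤ 0) : ρ y = 0 :=
  h.eq_zero_of_le (hy.trans (a_pos n).le)

theorem integrable : Integrable ρ :=
  h.continuous.integrable_of_hasCompactSupport
    (.of_support_subset_isCompact isCompact_Icc (h.support_subset_Ioc.trans Ioc_subset_Icc_self))

theorem mul_le_two_div (hr : 0 ≤ r) : r * ρ r ≤ 2 / n := by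
  rcases hr.eq_or_lt with rfl | hr
  · rw [zero_mul]; positivity
  calc r * ρ r ≤ r * (2 / (n * r)) := mul_le_mul_of_nonneg_left (h.2.2.2.2 r hr) hr.le
    _ = 2 / n := by field_simp

theorem primitive_eq_zero (hy : y ≤ a n) : primitive ρ y = 0 :=
  primitive_eq_zero_of_le (a_pos n).le (fun _ => h.eq_zero_of_le) hy

theorem primitive_nonneg (y : ℝ) : 0 ≤ primitive ρ y := by
  rcases le_total y 0 with hy | hy
  · exact (h.primitive_eq_zero (hy.trans (a_pos n).le)).ge
  · exact _root_.primitive_nonneg (fun z _ => h.nonneg z) hy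

theorem primitive_le_one (y : ℝ) : primitive ρ y ≤ 1 := by
  rcases le_total y 0 with hy | hy
  · exact (h.primitive_eq_zero (hy.trans (a_pos n).le)).trans_le zero_le_one
  · exact h.integral_eq_one ▸ primitive_le_integral h.nonneg h.integrable hy

theorem primitive_eq_one (hy : a (n - 1) ≤ y) : primitive ρ y = 1 :=
  (primitive_eq_integral h.support_subset_Ioc (a_pos _).le hy).trans h.integral_eq_one

theorem psi_eq_zero (hr : |r| ≤ a n) : psi ρ r = 0 :=
  primitive_eq_zero_of_le (a_pos n).le (fun _ => h.primitive_eq_zero) hr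

theorem psi_le_abs (r : ℝ) : psi ρ r ≤ |r| :=
  primitive_le_self (continuous_primitive h.continuous) h.primitive_le_one (abs_nonneg r)

theorem abs_sub_le_psi (r : ℝ) : |r| - a (n - 1) ≤ psi ρ r :=
  sub_le_primitive (continuous_primitive h.continuous) (fun z _ => h.primitive_nonneg z)
    (fun _ => h.primitive_eq_one) (a_pos _).le (abs_nonneg r)

theorem psi_le_of_succ {ρ' : ℝ → ℝ} (h' : IsMollifier (n + 1) ρ') (r : ℝ) :
    psi ρ r ≤ psi ρ' r := by
  refine primitive_mono (continuous_primitive h.continuous) (continuous_primitive h'.continuous)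
    (fun y => ?_) (abs_nonneg r)
  rcases le_total y (a n) with hy | hy
  · exact (h.primitive_eq_zero hy).trans_le (h'.primitive_nonneg y)
  · exact (h.primitive_le_one y).trans_eq (h'.primitive_eq_one (by simpa using hy)).symm

end IsMollifier

theorem tendsto_psi {P : ℕ → ℝ → ℝ} (hP : ∀ m, 1 ≤ m → IsMollifier m (P m)) (r : ℝ) :
    Tendsto (fun m => psi (P m) r) atTop (𝓝 |r|) := by
  have hlow : Tendsto (fun m => |r| - a (m - 1)) atTop (𝓝 |r|) := by
    simpa using tendsto_const_nhds.sub (tendsto_a_atTop.comp (tendsto_sub_atTop_nat 1))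
  refine tendsto_of_tendsto_of_tendsto_of_le_of_le' hlow tendsto_const_nhds ?_ ?_
  · filter_upwards [eventually_ge_atTop 1] with m hm using (hP m hm).abs_sub_le_psi r
  · filter_upwards [eventually_ge_atTop 1] with m hm using (hP m hm).psi_le_abs r

theorem stmt_2_general (n : ℕ) (ρ : ℝ → ℝ) (hρ : IsMollifier n ρ) :
    -- (i) even and C²
    ((∀ x : ℝ, psi ρ (-x) = psi ρ x) ∧ ContDiff ℝ 2 (psi ρ)) ∧
    -- (ii) the first derivative
    ((∀ r : ℝ, 0 ≤ r → deriv (psi ρ) r = ∫ z in (0:ℝ)..r, ρ z) ∧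
      (∀ r : ℝ, deriv (psi ρ) (-r) = -deriv (psi ρ) r) ∧
      (∀ r : ℝ, |deriv (psi ρ) r| ≤ 1) ∧
      (∀ r : ℝ, 0 ≤ r * deriv (psi ρ) r)) ∧
    -- (iii) the second derivative
    ((∀ r : ℝ, deriv (deriv (psi ρ)) r = ρ |r|) ∧
      (∀ r : ℝ, 0 ≤ deriv (deriv (psi ρ)) r) ∧
      (∀ r : ℝ, |r| * deriv (deriv (psi ρ)) r ≤ 2 / n)) ∧
    -- (iv) vanishing near the origin
    (∀ r ∈ Set.Icc (-(a n)) (a n),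
      psi ρ r = 0 ∧ deriv (psi ρ) r = 0 ∧ deriv (deriv (psi ρ)) r = 0) ∧
    -- (v) approximation of |r|
    (∀ r : ℝ, 0 ≤ |r| - psi ρ r ∧ |r| - psi ρ r ≤ a (n - 1)) ∧
    (∀ P : ℕ → ℝ → ℝ, (∀ m : ℕ, 1 ≤ m → IsMollifier m (P m)) →
      ∀ r : ℝ, Filter.Tendsto (fun m => psi (P m) r) Filter.atTop (nhds |r|)) ∧
    -- (vi) monotonicity in n
    (∀ ρ' : ℝ → ℝ, IsMollifier (n + 1) ρ' → ∀ r : ℝ, psi ρ r ≤ psi ρ' r) := by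
  have hρ0 : ∀ z ≤ 0, ρ z = 0 := fun _ => hρ.eq_zero_of_nonpos
  have hd1 := deriv_psi hρ0 hρ.continuous
  have hd2 := deriv_deriv_psi hρ0 hρ.continuous
  have hF0 : ∀ {y}, y ≤ 0 → primitive ρ y = 0 := fun hy =>
    hρ.primitive_eq_zero (hy.trans (a_pos n).le)
  refine ⟨⟨psi_neg ρ, contDiff_psi hρ0 hρ.continuous⟩,
    ⟨fun r hr => ?_, fun r => ?_, fun r => ?_, fun r => ?_⟩,
    ⟨hd2, fun r => hd2 r ▸ hρ.nonneg _, fun r => hd2 r ▸ hρ.mul_le_two_div (abs_nonneg r)⟩,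
    fun r hr => ?_, fun r => ?_, fun P hP => tendsto_psi hP, fun ρ' hρ' => hρ.psi_le_of_succ hρ'⟩
  · rw [hd1, Pi.sub_apply, Function.comp_apply, hF0 (neg_nonpos.2 hr), sub_zero, primitive]
  · simp only [hd1, Pi.sub_apply, Function.comp_apply, neg_neg, neg_sub]
  · rw [hd1]
    exact abs_sub_le_of_nonneg_of_le (hρ.primitive_nonneg _) (hρ.primitive_le_one _)
      (hρ.primitive_nonneg _) (hρ.primitive_le_one _)
  · rw [hd1, Pi.sub_apply, Function.comp_apply]
    rcases le_total 0 r with hr | hr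
    · rw [hF0 (neg_nonpos.2 hr), sub_zero]
      exact mul_nonneg hr (hρ.primitive_nonneg r)
    · rw [hF0 hr, zero_sub]
      exact mul_nonneg_of_nonpos_of_nonpos hr (neg_nonpos.2 (hρ.primitive_nonneg _))
  · have habs : |r| ≤ a n := abs_le.2 hr
    refine ⟨hρ.psi_eq_zero habs, ?_, hd2 r ▸ hρ.eq_zero_of_le habs⟩
    rw [hd1, Pi.sub_apply, Function.comp_apply, hρ.primitive_eq_zero hr.2,
      hρ.primitive_eq_zero (neg_le.1 hr.1), sub_zero]
  · exact ⟨sub_nonneg.2 (hρ.psi_le_abs r), sub_le_comm.1 (hρ.abs_sub_le_psi r)⟩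

theorem stmt_2 (n : ℕ) (hn : 1 ≤ n) (ρ : ℝ → ℝ) (hρ : IsMollifier n ρ) :
    -- (i) even and C²
    ((∀ x : ℝ, psi ρ (-x) = psi ρ x) ∧ ContDiff ℝ 2 (psi ρ)) ∧
    -- (ii) the first derivative
    ((∀ r : ℝ, 0 ≤ r → deriv (psi ρ) r = ∫ z in (0:ℝ)..r, ρ z) ∧
      (∀ r : ℝ, deriv (psi ρ) (-r) = -deriv (psi ρ) r) ∧
      (∀ r : ℝ, |deriv (psi ρ) r| ≤ 1) ∧
      (∀ r : ℝ, 0 ≤ r * deriv (psi ρ) r)) ∧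
    -- (iii) the second derivative
    ((∀ r : ℝ, deriv (deriv (psi ρ)) r = ρ |r|) ∧
      (∀ r : ℝ, 0 ≤ deriv (deriv (psi ρ)) r) ∧
      (∀ r : ℝ, |r| * deriv (deriv (psi ρ)) r ≤ 2 / n)) ∧
    -- (iv) vanishing near the origin
    (∀ r ∈ Set.Icc (-(a n)) (a n),
      psi ρ r = 0 ∧ deriv (psi ρ) r = 0 ∧ deriv (deriv (psi ρ)) r = 0) ∧
    -- (v) approximation of |r|
    (∀ r : ℝ, 0 ≤ |r| - psi ρ r ∧ |r| - psi ρ r ≤ a (n - 1)) ∧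
    (∀ P : ℕ → ℝ → ℝ, (∀ m : ℕ, 1 ≤ m → IsMollifier m (P m)) →
      ∀ r : ℝ, Filter.Tendsto (fun m => psi (P m) r) Filter.atTop (nhds |r|)) ∧
    -- (vi) monotonicity in n
    (∀ ρ' : ℝ → ℝ, IsMollifier (n + 1) ρ' → ∀ r : ℝ, psi ρ r ≤ psi ρ' r) :=
  stmt_2_general n ρ hρ
end

section
/- Let M > 0 and let ψ : ℝ → ℝ be twice continuously differentiable with ψ''(t) ≥ 0 and t·ψ''(t) ≤ M for all t > 0. Then for every a > 0 and every Δ ∈ ℝ with a + Δ ≥ 0, one has ψ(a+Δ) − ψ(a) − ψ'(a)·Δ ≤ M·Δ²/a. -/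
/-!
By Taylor's formula with integral remainder, with `x = a + Δ`,
`ψ x - ψ a - ψ' a * Δ = ∫ t in a..x, ψ'' t * (x - t)`.
Since `x ≥ 0`, the weight `|x - t| / t` on the segment between `a` and `x` is largest at `t = a`,
so `t * ψ'' t ≤ M` bounds the integrand, oriented along the direction of integration,
by `M * |Δ| / a`.
-/

open Set intervalIntegral

theorem sub_sub_mul_sub_eq_integral {f f' f'' : ℝ → ℝ} {a x : ℝ}
    (hf : ∀ t ∈ uIcc a x, HasDerivAt f (f' t) t)
    (hf' : ∀ t ∈ uIcc a x, HasDerivAt f' (f'' t) t)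
    (hint : IntervalIntegrable f'' MeasureTheory.volume a x) :
    f x - f a - f' a * (x - a) = ∫ t in a..x, f'' t * (x - t) := by
  have hderiv : ∀ t ∈ uIcc a x,
      HasDerivAt (fun s => f s + f' s * (x - s)) (f'' t * (x - t)) t := fun t ht =>
    ((hf t ht).add ((hf' t ht).mul ((hasDerivAt_id' t).const_sub x))).congr_deriv (by ring)
  rw [integral_eq_sub_of_hasDerivAt hderiv
    (hint.mul_continuousOn (continuous_const.sub continuous_id).continuousOn)]
  ring

theorem mul_abs_sub_le_mul_abs_sub_of_mem_uIcc {a x t : ℝ} (hx : 0 ≤ x) (ht : t ∈ uIcc a x) :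
    a * |x - t| ≤ t * |x - a| := by
  rcases mem_uIcc.mp ht with ⟨hat, htx⟩ | ⟨hxt, hta⟩
  · rw [abs_of_nonneg (sub_nonneg.mpr htx), abs_of_nonneg (sub_nonneg.mpr (hat.trans htx))]
    nlinarith
  · rw [abs_of_nonpos (sub_nonpos.mpr hxt), abs_of_nonpos (sub_nonpos.mpr (hxt.trans hta))]
    nlinarith

theorem mul_abs_sub_le_of_mul_le {h M a x t : ℝ} (hM : 0 ≤ M) (ha : 0 < a)
    (hta : a * |x - t| ≤ t * |x - a|) (hth : t * h ≤ M) :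
    h * |x - t| ≤ M * |x - a| / a := by
  rw [le_div_iff₀ ha]
  rcases le_or_gt h 0 with hh | hh
  · calc h * |x - t| * a ≤ 0 :=
          mul_nonpos_of_nonpos_of_nonneg (mul_nonpos_of_nonpos_of_nonneg hh (abs_nonneg _)) ha.le
      _ ≤ M * |x - a| := mul_nonneg hM (abs_nonneg _)
  · calc h * |x - t| * a = h * (a * |x - t|) := by ring
      _ ≤ h * (t * |x - a|) := mul_le_mul_of_nonneg_left hta hh.le
      _ = t * h * |x - a| := by ring
      _ ≤ M * |x - a| := mul_le_mul_of_nonneg_right hth (abs_nonneg _)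

theorem integral_mul_sub_le {h : ℝ → ℝ} {M a x : ℝ} (hM : 0 ≤ M) (ha : 0 < a) (hx : 0 ≤ x)
    (hh : ∀ t, 0 < t → t * h t ≤ M) (hint : IntervalIntegrable h MeasureTheory.volume a x) :
    ∫ t in a..x, h t * (x - t) ≤ M * (x - a) ^ 2 / a := by
  have hbound : ∀ t ∈ uIcc a x, 0 < t → h t * |x - t| ≤ M * |x - a| / a := fun t ht htpos =>
    mul_abs_sub_le_of_mul_le hM ha (mul_abs_sub_le_mul_abs_sub_of_mem_uIcc hx ht) (hh t htpos)
  rcases le_or_gt a x with hax | hxa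
  · have hint' : IntervalIntegrable (fun t => h t * (x - t)) MeasureTheory.volume a x :=
      hint.mul_continuousOn (continuous_const.sub continuous_id).continuousOn
    calc ∫ t in a..x, h t * (x - t) ≤ ∫ _ in a..x, M * |x - a| / a := by
          refine integral_mono_on_of_le_Ioo hax hint' intervalIntegrable_const fun t ht => ?_
          have := hbound t (Ioo_subset_Icc_self.trans Icc_subset_uIcc ht) (ha.trans ht.1)
          rwa [abs_of_pos (sub_pos.mpr ht.2)] at this
      _ = M * (x - a) ^ 2 / a := by
          rw [integral_const, smul_eq_mul, abs_of_nonneg (sub_nonneg.mpr hax)]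
          ring
  · have hint' : IntervalIntegrable (fun t => h t * (t - x)) MeasureTheory.volume x a :=
      hint.symm.mul_continuousOn (continuous_id.sub continuous_const).continuousOn
    calc ∫ t in a..x, h t * (x - t) = ∫ t in x..a, h t * (t - x) := by
          rw [integral_symm, ← integral_neg]
          simp only [← mul_neg, neg_sub]
      _ ≤ ∫ _ in x..a, M * |x - a| / a := by
          refine integral_mono_on_of_le_Ioo hxa.le hint' intervalIntegrable_const fun t ht => ?_
          have := hbound t (Ioo_subset_Icc_self.trans Icc_subset_uIcc' ht) (hx.trans_lt ht.1)
          rwa [abs_of_neg (sub_neg.mpr ht.1), neg_sub] at this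
      _ = M * (x - a) ^ 2 / a := by
          rw [integral_const, smul_eq_mul, abs_of_neg (sub_neg.mpr hxa)]
          ring

theorem stmt_3_general (M : ℝ) (hM : 0 < M) (ψ : ℝ → ℝ) (hψ : ContDiff ℝ 2 ψ)
    (hbd : ∀ t : ℝ, 0 < t → t * deriv (deriv ψ) t ≤ M)
    (a Δ : ℝ) (ha : 0 < a) (haΔ : 0 ≤ a + Δ) :
    ψ (a + Δ) - ψ a - deriv ψ a * Δ ≤ M * Δ ^ 2 / a := by
  have hψ' : ContDiff ℝ 1 (deriv ψ) := hψ.iterate_deriv' 1 1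
  have hdψ : Differentiable ℝ ψ := hψ.differentiable two_ne_zero
  have hdψ' : Differentiable ℝ (deriv ψ) := hψ'.differentiable one_ne_zero
  have hψ'' : Continuous (deriv (deriv ψ)) := hψ'.continuous_deriv le_rfl
  have htaylor := sub_sub_mul_sub_eq_integral (fun t _ => (hdψ t).hasDerivAt)
    (fun t _ => (hdψ' t).hasDerivAt) (hψ''.intervalIntegrable a (a + Δ))
  rw [add_sub_cancel_left] at htaylor
  rw [htaylor]
  simpa using integral_mul_sub_le hM.le ha haΔ hbd (hψ''.intervalIntegrable a (a + Δ))

theorem stmt_3 (M : ℝ) (hM : 0 < M) (ψ : ℝ → ℝ) (hψ : ContDiff ℝ 2 ψ)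
    (hconv : ∀ t : ℝ, 0 < t → 0 ≤ deriv (deriv ψ) t)
    (hbd : ∀ t : ℝ, 0 < t → t * deriv (deriv ψ) t ≤ M)
    (a Δ : ℝ) (ha : 0 < a) (haΔ : 0 ≤ a + Δ) :
    ψ (a + Δ) - ψ a - deriv ψ a * Δ ≤ M * Δ ^ 2 / a :=
  stmt_3_general M hM ψ hψ hbd a Δ ha haΔ
end

section
/- Let (U, 𝔘) be a measurable space and ν a σ-finite measure on U. Let M > 0, κ > 0, and let ψ : ℝ → ℝ be even and twice continuously differentiable with ψ''(t) ≥ 0 and |t|·ψ''(t) ≤ M for all t ∈ ℝ. Let σ : ℝ → ℝ and c : ℝ × U → ℝ be such that u ↦ c(x,u) is measurable for each x, the map x ↦ x + c(x,u) is nondecreasing for every u ∈ U, and (σ(x) − σ(z))² + ∫_U (c(x,u) − c(z,u))² ν(du) ≤ κ·|x − z| for all x, z ∈ ℝ. Then for all x ≠ z the integrand u ↦ ψ(x−z+c(x,u)−c(z,u)) − ψ(x−z) − ψ'(x−z)·(c(x,u)−c(z,u)) is nonnegative and (1/2)·ψ''(x−z)·(σ(x)−σ(z))² + ∫_U [ψ(x−z+c(x,u)−c(z,u))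 − ψ(x−z) − ψ'(x−z)·(c(x,u)−c(z,u))] ν(du) ≤ (3/2)·M·κ. -/
/-!
Write `a = x - z` and `h = c x u - c z u`. Monotonicity of `x ↦ x + c x u` puts `a` and `a + h` on
the same side of `0`. In Taylor's formula `ψ (a + h) - ψ a - ψ' a * h = ∫ s in a..a + h,
(a + h - s) * ψ'' s` the integrand has the sign of `h`, and for `s` between `a` and `a + h` we have
`|a + h - s| * |a| ≤ |h| * |s|`; with `|s| * ψ'' s ≤ M` this bounds the remainder by `M / |a| * h ^ 2`.
Also `ψ'' a ≤ M / |a|`, so the left-hand side is at most `M / |x - z|` times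
`(σ x - σ z) ^ 2 + ∫ (c x u - c z u) ^ 2 dν ≤ κ * |x - z|`.
-/
open MeasureTheory Set

theorem abs_sub_mul_abs_le_of_mem_uIcc {a b s : ℝ} (hab : 0 ≤ a * b) (hs : s ∈ uIcc a b) :
    |b - s| * |a| ≤ |b - a| * |s| := by
  rcases lt_trichotomy a 0 with ha | rfl | ha
  · have hb : b ≤ 0 := nonpos_of_mul_nonneg_right hab ha
    rcases mem_uIcc.mp hs with ⟨h₁, h₂⟩ | ⟨h₁, h₂⟩ <;>
    rcases abs_cases (b - s) with ⟨hbs, _⟩ | ⟨hbs, _⟩ <;>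
    rcases abs_cases (b - a) with ⟨hba, _⟩ | ⟨hba, _⟩ <;>
    rw [abs_of_neg ha, abs_of_nonpos (by linarith : s ≤ 0), hbs, hba] <;> nlinarith
  · rw [abs_zero, mul_zero]; positivity
  · have hb : 0 ≤ b := nonneg_of_mul_nonneg_right hab ha
    rcases mem_uIcc.mp hs with ⟨h₁, h₂⟩ | ⟨h₁, h₂⟩ <;>
    rcases abs_cases (b - s) with ⟨hbs, _⟩ | ⟨hbs, _⟩ <;>
    rcases abs_cases (b - a) with ⟨hba, _⟩ | ⟨hba, _⟩ <;>
    rw [abs_of_pos ha, abs_of_nonneg (by linarith : 0 ≤ s), hbs, hba] <;> nlinarith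

section TaylorRemainder

variable {f : ℝ → ℝ}

theorem sub_sub_deriv_mul_eq_integral (hf : ContDiff ℝ 2 f) (a h : ℝ) :
    f (a + h) - f a - deriv f a * h = ∫ s in a..a + h, (a + h - s) * deriv (deriv f) s := by
  have hf' : ContDiff ℝ 1 (deriv f) := (contDiff_succ_iff_deriv.mp hf).2.2
  have hF : ∀ s ∈ uIcc a (a + h), HasDerivAt (fun s ↦ (a + h - s) * deriv f s + f s)
      ((a + h - s) * deriv (deriv f) s) s := fun s _ ↦ by
    have hlin : HasDerivAt (fun s ↦ a + h - s) (-1) s := by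
      simpa using (hasDerivAt_id s).const_sub (a + h)
    exact ((hlin.mul ((hf'.differentiable one_ne_zero) s).hasDerivAt).add
      ((hf.differentiable two_ne_zero) s).hasDerivAt).congr_deriv (by ring)
  rw [intervalIntegral.integral_eq_sub_of_hasDerivAt hF
    (((continuous_const.sub continuous_id).mul (hf'.continuous_deriv le_rfl)).intervalIntegrable _ _)]
  ring

theorem sub_sub_deriv_mul_nonneg (hf : ContDiff ℝ 2 f) (hconv : ∀ t, 0 ≤ deriv (deriv f) t)
    (a h : ℝ) : 0 ≤ f (a + h) - f a - deriv f a * h := by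
  rw [sub_sub_deriv_mul_eq_integral hf]
  rcases le_total 0 h with hh | hh
  · exact intervalIntegral.integral_nonneg (by linarith) fun s hs ↦
      mul_nonneg (by linarith [hs.2]) (hconv s)
  · rw [intervalIntegral.integral_symm, ← intervalIntegral.integral_neg]
    exact intervalIntegral.integral_nonneg (by linarith) fun s hs ↦
      neg_nonneg.2 (mul_nonpos_of_nonpos_of_nonneg (by linarith [hs.1]) (hconv s))

theorem sub_sub_deriv_mul_le {a h M : ℝ} (hf : ContDiff ℝ 2 f) (hconv : ∀ t, 0 ≤ deriv (deriv f) t)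
    (hbd : ∀ t, |t| * deriv (deriv f) t ≤ M) (ha : a ≠ 0) (hah : 0 ≤ a * (a + h)) :
    f (a + h) - f a - deriv f a * h ≤ M / |a| * h ^ 2 := by
  have hpt : ∀ s ∈ uIoc a (a + h), ‖(a + h - s) * deriv (deriv f) s‖ ≤ M / |a| * |h| := by
    intro s hs
    rw [Real.norm_eq_abs, abs_mul, abs_of_nonneg (hconv s), div_mul_eq_mul_div,
      le_div_iff₀ (abs_pos.mpr ha)]
    calc |a + h - s| * deriv (deriv f) s * |a|
        = (|a + h - s| * |a|) * deriv (deriv f) s := by ring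
      _ ≤ (|a + h - a| * |s|) * deriv (deriv f) s :=
        mul_le_mul_of_nonneg_right
          (abs_sub_mul_abs_le_of_mem_uIcc hah (uIoc_subset_uIcc hs)) (hconv s)
      _ ≤ |h| * M := by rw [add_sub_cancel_left, mul_assoc]; gcongr; exact hbd s
      _ = M * |h| := mul_comm _ _
  calc f (a + h) - f a - deriv f a * h
      ≤ ‖∫ s in a..a + h, (a + h - s) * deriv (deriv f) s‖ := by
        rw [sub_sub_deriv_mul_eq_integral hf, Real.norm_eq_abs]; exact le_abs_self _
    _ ≤ M / |a| * |h| * |a + h - a| := intervalIntegral.norm_integral_le_of_norm_le_const hpt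
    _ = M / |a| * h ^ 2 := by rw [add_sub_cancel_left, mul_assoc, ← sq, sq_abs]

end TaylorRemainder

theorem ofReal_add_lintegral_ofReal_le_mul {α : Type*} [MeasurableSpace α] {μ : Measure α}
    {C p p' D : ℝ} {q q' : α → ℝ} (hC : 0 ≤ C) (hp : p ≤ C * p') (hq : ∀ u, q u ≤ C * q' u)
    (hD : ENNReal.ofReal p' + ∫⁻ u, ENNReal.ofReal (q' u) ∂μ ≤ ENNReal.ofReal D) :
    ENNReal.ofReal p + ∫⁻ u, ENNReal.ofReal (q u) ∂μ ≤ ENNReal.ofReal (C * D) :=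
  calc ENNReal.ofReal p + ∫⁻ u, ENNReal.ofReal (q u) ∂μ
      ≤ ENNReal.ofReal (C * p') + ∫⁻ u, ENNReal.ofReal (C * q' u) ∂μ := by
        gcongr with u
        exact hq u
    _ = ENNReal.ofReal C * (ENNReal.ofReal p' + ∫⁻ u, ENNReal.ofReal (q' u) ∂μ) := by
        simp only [ENNReal.ofReal_mul hC, lintegral_const_mul' _ _ ENNReal.ofReal_ne_top, mul_add]
    _ ≤ ENNReal.ofReal (C * D) := by rw [ENNReal.ofReal_mul hC]; gcongr

theorem stmt_4_general {U : Type*} [MeasurableSpace U] (ν : Measure U)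
    (M κ : ℝ)
    (ψ : ℝ → ℝ) (hψ : ContDiff ℝ 2 ψ)
    (hconv : ∀ t : ℝ, 0 ≤ deriv (deriv ψ) t)
    (hbd : ∀ t : ℝ, |t| * deriv (deriv ψ) t ≤ M)
    (σ : ℝ → ℝ) (c : ℝ → U → ℝ)
    (hmono : ∀ u : U, Monotone fun x : ℝ => x + c x u)
    (hcont : ∀ x z : ℝ,
      ENNReal.ofReal ((σ x - σ z) ^ 2) +
        (∫⁻ u, ENNReal.ofReal ((c x u - c z u) ^ 2) ∂ν) ≤
        ENNReal.ofReal (κ * |x - z|)) :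
    ∀ x z : ℝ, x ≠ z →
      (∀ u : U, 0 ≤ ψ (x - z + c x u - c z u) - ψ (x - z) -
        deriv ψ (x - z) * (c x u - c z u)) ∧
      ENNReal.ofReal ((1 / 2) * deriv (deriv ψ) (x - z) * (σ x - σ z) ^ 2) +
        (∫⁻ u, ENNReal.ofReal (ψ (x - z + c x u - c z u) - ψ (x - z) -
          deriv ψ (x - z) * (c x u - c z u)) ∂ν) ≤
        ENNReal.ofReal ((3 / 2) * M * κ) := by
  intro x z hxz
  have hxz' : 0 < |x - z| := abs_pos.mpr (sub_ne_zero.mpr hxz)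
  have hsplit : ∀ u, x - z + c x u - c z u = (x - z) + (c x u - c z u) := fun u ↦
    add_sub_assoc _ _ _
  refine ⟨fun u ↦ hsplit u ▸ sub_sub_deriv_mul_nonneg hψ hconv _ _, ?_⟩
  have hL : 0 ≤ M / |x - z| := div_nonneg (by simpa using hbd 0) hxz'.le
  have hdiffusion : 1 / 2 * deriv (deriv ψ) (x - z) * (σ x - σ z) ^ 2 ≤
      M / |x - z| * (σ x - σ z) ^ 2 := by
    have : deriv (deriv ψ) (x - z) ≤ M / |x - z| := by
      rw [le_div_iff₀ hxz', mul_comm]; exact hbd _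
    gcongr
    linarith [hconv (x - z)]
  have hjump : ∀ u, ψ (x - z + c x u - c z u) - ψ (x - z) - deriv ψ (x - z) * (c x u - c z u) ≤
      M / |x - z| * (c x u - c z u) ^ 2 := fun u ↦ by
    have hsign := ((hmono u).monovary monotone_id).sub_mul_sub_nonneg z x
    rw [hsplit u]
    simp only [id] at hsign
    exact sub_sub_deriv_mul_le hψ hconv hbd (sub_ne_zero.mpr hxz) (by linarith)
  calc _ ≤ ENNReal.ofReal (M / |x - z| * (κ * |x - z|)) :=
        ofReal_add_lintegral_ofReal_le_mul hL hdiffusion hjump (hcont x z)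
    _ ≤ ENNReal.ofReal (3 / 2 * M * κ) := by
        rw [show M / |x - z| * (κ * |x - z|) = M * κ by field_simp,
          ENNReal.ofReal_le_ofReal_iff']
        exact (le_total (M * κ) 0).elim .inr fun h ↦ .inl (by linarith)

theorem stmt_4 {U : Type*} [MeasurableSpace U] (ν : Measure U) [SigmaFinite ν]
    (M κ : ℝ) (hM : 0 < M) (hκ : 0 < κ)
    (ψ : ℝ → ℝ) (heven : ∀ t : ℝ, ψ (-t) = ψ t) (hψ : ContDiff ℝ 2 ψ)
    (hconv : ∀ t : ℝ, 0 ≤ deriv (deriv ψ) t)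
    (hbd : ∀ t : ℝ, |t| * deriv (deriv ψ) t ≤ M)
    (σ : ℝ → ℝ) (c : ℝ → U → ℝ)
    (hmeas : ∀ x : ℝ, Measurable (c x))
    (hmono : ∀ u : U, Monotone fun x : ℝ => x + c x u)
    (hcont : ∀ x z : ℝ,
      ENNReal.ofReal ((σ x - σ z) ^ 2) +
        (∫⁻ u, ENNReal.ofReal ((c x u - c z u) ^ 2) ∂ν) ≤
        ENNReal.ofReal (κ * |x - z|)) :
    ∀ x z : ℝ, x ≠ z →
      (∀ u : U, 0 ≤ ψ (x - z + c x u - c z u) - ψ (x - z) -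
        deriv ψ (x - z) * (c x u - c z u)) ∧
      ENNReal.ofReal ((1 / 2) * deriv (deriv ψ) (x - z) * (σ x - σ z) ^ 2) +
        (∫⁻ u, ENNReal.ofReal (ψ (x - z + c x u - c z u) - ψ (x - z) -
          deriv ψ (x - z) * (c x u - c z u)) ∂ν) ≤
        ENNReal.ofReal ((3 / 2) * M * κ) :=
  stmt_4_general ν M κ ψ hψ hconv hbd σ c hmono hcont
end

section
/- Let (U, 𝔘) be a measurable space and ν a σ-finite measure on U. Let M > 0, κ > 0, β > 0, and let ψ : ℝ → ℝ be even and twice continuously differentiable with ψ''(t) ≥ 0 and |t|·ψ''(t) ≤ M for all t ∈ ℝ. Let σ : ℝ → ℝ and c : ℝ × U → ℝ be such that u ↦ c(x,u) is measurable for each x, |x − z + θ·(c(x,u) − c(z,u))| ≥ β·|x − z| for all x, z ∈ ℝ, u ∈ U and θ ∈ [0,1], and (σ(x) − σ(z))² + ∫_U (c(x,u) − c(z,u))² ν(du) ≤ κ·|x − z| for all x, z ∈ ℝ. Then for all x ≠ z, (1/2)·ψ''(x−z)·(σ(x)−σ(z))² + ∫_U [ψ(x−z+c(x,u)−c(z,u))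 − ψ(x−z) − ψ'(x−z)·(c(x,u)−c(z,u))] ν(du) ≤ (M·κ/2)·(1 + 1/β). -/
/-!
With `a = x - z ≠ 0` and `h = c x u - c z u`, Taylor's formula gives
`ψ (a + h) - ψ a - ψ' a * h = ψ'' (a + θ h) h² / 2` for some `θ ∈ [0, 1]`. The nondegeneracy
hypothesis keeps `|a + θ h| ≥ β |a|`, so `|t| ψ'' t ≤ M` bounds `ψ'' (a + θ h)` by `M / (β |a|)`,
and likewise `ψ'' a ≤ M / |a|`. Both terms are therefore at most `C = (M / |a| + M / (β |a|)) / 2`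
times the quadratic quantities of the continuity hypothesis, whose sum is at most `κ |a|`; the
factor `|a|` cancels.
-/

open MeasureTheory Set

theorem exists_taylor_lagrange_two {f : ℝ → ℝ} (hf : ContDiff ℝ 2 f) (a h : ℝ) :
    ∃ θ ∈ Icc (0 : ℝ) 1,
      f (a + h) - f a - deriv f a * h = deriv (deriv f) (a + θ * h) * h ^ 2 / 2 := by
  rcases eq_or_ne h 0 with rfl | hh
  · exact ⟨0, left_mem_Icc.2 zero_le_one, by simp⟩
  have hne : a ≠ a + h := by simpa [eq_comm] using hh
  obtain ⟨x', hx', hrem⟩ :=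
    taylor_mean_remainder_lagrange_iteratedDeriv (n := 1) hne hf.contDiffOn
  have hseg : x' ∈ segment ℝ a (a + h) := segment_eq_uIcc a (a + h) ▸ uIoo_subset_uIcc_self hx'
  obtain ⟨θ, hθ, rfl⟩ := (segment_eq_image' ℝ a (a + h)).subset hseg
  have hderiv : derivWithin f (uIcc a (a + h)) a = deriv f a :=
    (hf.differentiable two_ne_zero a).derivWithin (uniqueDiffOn_uIcc hne a left_mem_uIcc)
  refine ⟨θ, hθ, ?_⟩
  norm_num [taylorWithinEval_succ, iteratedDeriv_succ, hderiv] at hrem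
  linarith

theorem le_div_of_mul_le_of_le {s y r M : ℝ} (hy : 0 ≤ y) (hr : 0 < r) (hrs : r ≤ s)
    (h : s * y ≤ M) : y ≤ M / r := by
  rw [le_div_iff₀' hr]
  exact (mul_le_mul_of_nonneg_right hrs hy).trans h

theorem taylor_remainder_le_of_abs_mul_deriv_deriv_le {f : ℝ → ℝ} {M β a h : ℝ}
    (hf : ContDiff ℝ 2 f) (hconv : ∀ t, 0 ≤ deriv (deriv f) t)
    (hbd : ∀ t, |t| * deriv (deriv f) t ≤ M) (hβa : 0 < β * |a|)
    (hnd : ∀ θ ∈ Icc (0 : ℝ) 1, β * |a| ≤ |a + θ * h|) :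
    f (a + h) - f a - deriv f a * h ≤ M / (β * |a|) * h ^ 2 / 2 := by
  obtain ⟨θ, hθ, heq⟩ := exists_taylor_lagrange_two hf a h
  rw [heq]
  gcongr
  exact le_div_of_mul_le_of_le (hconv _) hβa (hnd θ hθ) (hbd _)

theorem ofReal_add_lintegral_le_ofReal_mul {α : Type*} [MeasurableSpace α] {μ : Measure α}
    {C p q K : ℝ} {f g : α → ℝ} (hC : 0 ≤ C) (hp : p ≤ C * q) (hf : ∀ u, f u ≤ C * g u)
    (hK : ENNReal.ofReal q + ∫⁻ u, ENNReal.ofReal (g u) ∂μ ≤ ENNReal.ofReal K) :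
    ENNReal.ofReal p + ∫⁻ u, ENNReal.ofReal (f u) ∂μ ≤ ENNReal.ofReal (C * K) :=
  calc ENNReal.ofReal p + ∫⁻ u, ENNReal.ofReal (f u) ∂μ
      ≤ ENNReal.ofReal C * ENNReal.ofReal q +
          ∫⁻ u, ENNReal.ofReal C * ENNReal.ofReal (g u) ∂μ := by
        gcongr with u
        · rw [← ENNReal.ofReal_mul hC]; exact ENNReal.ofReal_le_ofReal hp
        · rw [← ENNReal.ofReal_mul hC]; exact ENNReal.ofReal_le_ofReal (hf u)
    _ = ENNReal.ofReal C * (ENNReal.ofReal q + ∫⁻ u, ENNReal.ofReal (g u) ∂μ) := by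
        rw [lintegral_const_mul' _ _ ENNReal.ofReal_ne_top, mul_add]
    _ ≤ ENNReal.ofReal (C * K) := by
        rw [ENNReal.ofReal_mul hC]; gcongr

theorem stmt_5_general {U : Type*} [MeasurableSpace U] (ν : Measure U)
    (M κ β : ℝ) (hβ : 0 < β)
    (ψ : ℝ → ℝ) (hψ : ContDiff ℝ 2 ψ)
    (hconv : ∀ t : ℝ, 0 ≤ deriv (deriv ψ) t)
    (hbd : ∀ t : ℝ, |t| * deriv (deriv ψ) t ≤ M)
    (σ : ℝ → ℝ) (c : ℝ → U → ℝ)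
    (hnondeg : ∀ x z : ℝ, ∀ u : U, ∀ θ ∈ Set.Icc (0:ℝ) 1,
      β * |x - z| ≤ |x - z + θ * (c x u - c z u)|)
    (hcont : ∀ x z : ℝ,
      ENNReal.ofReal ((σ x - σ z) ^ 2) +
        (∫⁻ u, ENNReal.ofReal ((c x u - c z u) ^ 2) ∂ν) ≤
        ENNReal.ofReal (κ * |x - z|)) :
    ∀ x z : ℝ, x ≠ z →
      ENNReal.ofReal ((1 / 2) * deriv (deriv ψ) (x - z) * (σ x - σ z) ^ 2) +
        (∫⁻ u, ENNReal.ofReal (ψ (x - z + c x u - c z u) - ψ (x - z) -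
          deriv ψ (x - z) * (c x u - c z u)) ∂ν) ≤
        ENNReal.ofReal ((M * κ / 2) * (1 + 1 / β)) := by
  intro x z hxz
  have ha : 0 < |x - z| := abs_pos.2 (sub_ne_zero.2 hxz)
  have hM : 0 ≤ M := by simpa using hbd 0
  have hA : 0 ≤ M / |x - z| := by positivity
  have hB : 0 ≤ M / (β * |x - z|) := by positivity
  refine (ofReal_add_lintegral_le_ofReal_mul (C := (M / |x - z| + M / (β * |x - z|)) / 2)
    (by positivity) ?_ (fun u => ?_) (hcont x z)).trans_eq ?_
  · have hψ'' := le_div_of_mul_le_of_le (hconv (x - z)) ha le_rfl (hbd (x - z))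
    gcongr
    linarith
  · rw [add_sub_assoc]
    calc _ ≤ M / (β * |x - z|) * (c x u - c z u) ^ 2 / 2 :=
          taylor_remainder_le_of_abs_mul_deriv_deriv_le hψ hconv hbd (by positivity)
            (hnondeg x z u)
      _ ≤ _ := by
          rw [mul_div_right_comm]
          gcongr
          linarith
  · congr 1
    field_simp

theorem stmt_5 {U : Type*} [MeasurableSpace U] (ν : Measure U) [SigmaFinite ν]
    (M κ β : ℝ) (hM : 0 < M) (hκ : 0 < κ) (hβ : 0 < β)
    (ψ : ℝ → ℝ) (heven : ∀ t : ℝ, ψ (-t) = ψ t) (hψ : ContDiff ℝ 2 ψ)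
    (hconv : ∀ t : ℝ, 0 ≤ deriv (deriv ψ) t)
    (hbd : ∀ t : ℝ, |t| * deriv (deriv ψ) t ≤ M)
    (σ : ℝ → ℝ) (c : ℝ → U → ℝ)
    (hmeas : ∀ x : ℝ, Measurable (c x))
    (hnondeg : ∀ x z : ℝ, ∀ u : U, ∀ θ ∈ Set.Icc (0:ℝ) 1,
      β * |x - z| ≤ |x - z + θ * (c x u - c z u)|)
    (hcont : ∀ x z : ℝ,
      ENNReal.ofReal ((σ x - σ z) ^ 2) +
        (∫⁻ u, ENNReal.ofReal ((c x u - c z u) ^ 2) ∂ν) ≤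
        ENNReal.ofReal (κ * |x - z|)) :
    ∀ x z : ℝ, x ≠ z →
      ENNReal.ofReal ((1 / 2) * deriv (deriv ψ) (x - z) * (σ x - σ z) ^ 2) +
        (∫⁻ u, ENNReal.ofReal (ψ (x - z + c x u - c z u) - ψ (x - z) -
          deriv ψ (x - z) * (c x u - c z u)) ∂ν) ≤
        ENNReal.ofReal ((M * κ / 2) * (1 + 1 / β)) :=
  stmt_5_general ν M κ β hβ ψ hψ hconv hbd σ c hnondeg hcont
end

section
/- Let F(r) = r/(1+r) for r ≥ 0, so F'(r) = 1/(1+r)². Then for every d ≥ 1 and all w, δ ∈ ℝ^d with w ≠ 0, one has F(|w+δ|) − F(|w|) − (1/(1+|w|)²)·⟨w, δ⟩/|w| ≤ (1/(1+|w|)²)·min( |δ|²/(2|w|), 2|δ| ). -/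
open scoped RealInnerProductSpace

/-- `F r = r / (1 + r)`. -/
noncomputable def F (r : ℝ) : ℝ := r / (1 + r)

theorem stmt_7 (d : ℕ) (hd : 1 ≤ d) (w δ : EuclideanSpace ℝ (Fin d)) (hw : w ≠ 0) :
    F ‖w + δ‖ - F ‖w‖ - (1 / (1 + ‖w‖) ^ 2) * (⟪w, δ⟫ / ‖w‖) ≤
      (1 / (1 + ‖w‖) ^ 2) * min (‖δ‖ ^ 2 / (2 * ‖w‖)) (2 * ‖δ‖) := by
  set a := ‖w‖ with ha'
  set b := ‖w + δ‖ with hb'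
  set e := ‖δ‖ with he'
  set t := ⟪w, δ⟫ with ht'
  have ha : 0 < a := norm_pos_iff.mpr hw
  have hb0 : 0 ≤ b := norm_nonneg _
  have he : 0 ≤ e := norm_nonneg _
  have h1a : (0:ℝ) < 1 + a := by linarith
  have h1b : (0:ℝ) < 1 + b := by linarith
  have hsq : b ^ 2 = a ^ 2 + 2 * t + e ^ 2 := by
    have := norm_add_sq_real w δ
    linarith [this]
  have hcs : |t| ≤ a * e := abs_real_inner_le_norm w δ
  have hF : F b - F a ≤ 1 / (1 + a) ^ 2 * (b - a) := by
    have key : F b - F a = (b - a) / ((1 + b) * (1 + a)) := by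
      unfold F; field_simp; ring
    have key2 : 1 / (1 + a) ^ 2 * (b - a) = (b - a) / (1 + a) ^ 2 := by ring
    rw [key, key2, div_le_div_iff₀ (by positivity) (by positivity)]
    nlinarith [sq_nonneg (b - a)]
  have hmin : b - a - t / a ≤ min (e ^ 2 / (2 * a)) (2 * e) := by
    rw [le_min_iff]
    constructor
    · have key : b - a - t / a = (e ^ 2 - (a - b) ^ 2) / (2 * a) := by
        field_simp
        nlinarith [hsq]
      rw [key]
      gcongr
      nlinarith [sq_nonneg (a - b)]
    · have htri : b ≤ a + e := norm_add_le w δ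
      have h1 := (abs_le.mp hcs).1
      have h2 : -e ≤ t / a := by
        rw [le_div_iff₀ ha]; nlinarith
      linarith
  have hfac : (0:ℝ) ≤ 1 / (1 + a) ^ 2 := by positivity
  calc F b - F a - 1 / (1 + a) ^ 2 * (t / a)
      ≤ 1 / (1 + a) ^ 2 * (b - a) - 1 / (1 + a) ^ 2 * (t / a) := by linarith
    _ = 1 / (1 + a) ^ 2 * (b - a - t / a) := by ring
    _ ≤ _ := mul_le_mul_of_nonneg_left hmin hfac
end

section
/- Let d ≥ 2, let (U, 𝔘) be a measurable space with a σ-finite measure ν, and let δ₀, R, κ > 0. Let ϱ : [0,∞) → [0,∞) be continuous, nondecreasing, concave, with ϱ(r) > 0 for r > 0 and ϱ(r) ≤ (1+r)²·ϱ(r/(1+r)) for all r > 0. Let b : ℝ^d → ℝ^d, σ : ℝ^d → ℝ^{d×d} and c : ℝ^d × U → ℝ^d (with u ↦ c(x,u) measurable) satisfy, for all x, z with |x| ∨ |z| ≤ R and |x − z| ≤ δ₀: ∫_U min( |c(x,u)−c(z,u)|², 4|x−z|·|c(x,u)−c(z,u)| ) ν(du) + 2⟨x−z, b(x)−b(z)⟩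 + ‖σ(x)−σ(z)‖² ≤ 2κ·|x−z|·ϱ(|x−z|), where ‖·‖ is the Frobenius norm. Then for all such x, z with x ≠ z, the function u ↦ G(x−z+c(x,u)−c(z,u)) − G(x−z) − ⟨∇G(x−z), c(x,u)−c(z,u)⟩ is ν-integrable and (1/2)·tr( (σ(x)−σ(z))(σ(x)−σ(z))ᵀ ∇²G(x−z) ) + ⟨b(x)−b(z), ∇G(x−z)⟩ + ∫_U [ G(x−z+c(x,u)−c(z,u)) − G(x−z) − ⟨∇G(x−z), c(x,u)−c(z,u)⟩ ] ν(du) ≤ κ·ϱ(F(|x−z|)). -/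
open MeasureTheory Matrix
open scoped RealInnerProductSpace

/-- `G w = |w| / (1 + |w|)` on `ℝ^d`. -/
noncomputable def G (d : ℕ) (w : EuclideanSpace ℝ (Fin d)) : ℝ := ‖w‖ / (1 + ‖w‖)

/-- The gradient `∇G`. -/
noncomputable def gradG (d : ℕ) (w : EuclideanSpace ℝ (Fin d)) : EuclideanSpace ℝ (Fin d) :=
  gradient (G d) w

/-- The Hessian matrix `∇²G`. -/
noncomputable def hessG (d : ℕ) (w : EuclideanSpace ℝ (Fin d)) : Matrix (Fin d) (Fin d) ℝ :=
  Matrix.of fun i j =>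
    iteratedFDeriv ℝ 2 (G d) w ![EuclideanSpace.single i 1, EuclideanSpace.single j 1]

/-! For `w = x - z ≠ 0` and `r = ‖w‖`, `G` is radial with `∇G w = w / (r (1 + r)²)` and
`∇²G w = I / (r (1 + r)²) - β w wᵀ` for some `β ≥ 0`, so the diffusion term is at most
`‖σ x - σ z‖² / (2 r (1 + r)²)`. With `s = ‖w + v‖` and `n = ‖v‖`, the jump integrand equals
`(n² - (s - r)² - 2 r (s - r)² / (1 + s)) / (2 r (1 + r)²)`, and the triangle inequalities
`|s - r| ≤ n ≤ s + r` bound it by `min (n², 4 r n) / (2 r (1 + r)²)` (and its absolute value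
by `1 + 2 r` times that, whence integrability). All three terms of the
generator thus share the factor `1 / (2 r (1 + r)²)`, the hypothesis bounds their sum by
`κ ϱ(r) / (1 + r)²`, and `ϱ r ≤ (1 + r)² ϱ (F r)` concludes. -/

section Triangle

variable {r s n : ℝ}

theorem sq_sub_sq_le_min (hr : 0 ≤ r) (hsr : |s - r| ≤ n) (hn : n ≤ s + r) :
    n ^ 2 - (s - r) ^ 2 ≤ min (n ^ 2) (4 * r * n) := by
  obtain ⟨hsr₁, hsr₂⟩ := abs_le.mp hsr
  refine le_min (by nlinarith) ?_
  -- `n² - (s - r)² = (n - (s - r)) (n + (s - r))` with `n - (s - r) ≤ 2 r` and `n + (s - r) ≤ 2 n`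
  nlinarith [mul_le_mul_of_nonneg_right (show n - (s - r) ≤ 2 * r by linarith)
    (show 0 ≤ n + (s - r) by linarith)]

theorem sq_mul_div_le_min (hr : 0 ≤ r) (hs : 0 ≤ s) (hsr : |s - r| ≤ n) :
    2 * r * (s - r) ^ 2 / (1 + s) ≤ (1 + 2 * r) * min (n ^ 2) (4 * r * n) := by
  have hn : 0 ≤ n := (abs_nonneg _).trans hsr
  have hsq : (s - r) ^ 2 ≤ n * |s - r| := by
    rw [← sq_abs, sq]; exact mul_le_mul_of_nonneg_right hsr (abs_nonneg _)
  have hsr' : |s - r| ≤ (1 + s) * (1 + r) := by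
    rw [abs_le]; constructor <;> nlinarith
  rw [mul_min_of_nonneg _ _ (by linarith : (0 : ℝ) ≤ 1 + 2 * r)]
  have h2r : 0 ≤ 2 * r := by linarith
  refine le_min ?_ ?_ <;> rw [div_le_iff₀ (by linarith)]
  · have ht : (s - r) ^ 2 ≤ n ^ 2 := hsq.trans (by nlinarith)
    nlinarith [mul_le_mul_of_nonneg_left ht h2r,
      mul_nonneg (sq_nonneg n) (show 0 ≤ (1 + 2 * r) * (1 + s) - 2 * r by nlinarith)]
  · nlinarith [mul_le_mul_of_nonneg_left hsq h2r,
      mul_le_mul_of_nonneg_left hsr' (show 0 ≤ 2 * r * n by positivity),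
      mul_nonneg (mul_nonneg (mul_nonneg h2r hn) (show 0 ≤ 1 + s by linarith))
        (show 0 ≤ 1 + 3 * r by linarith)]

end Triangle

section InnerProductSpace

variable {E : Type*} [NormedAddCommGroup E] [InnerProductSpace ℝ E]

theorem hasFDerivAt_norm_of_ne_zero {w : E} (hw : w ≠ 0) :
    HasFDerivAt (fun y : E => ‖y‖) (‖w‖⁻¹ • innerSL ℝ w) w := by
  have hsqrt := (Real.hasDerivAt_sqrt (pow_pos (norm_pos_iff.2 hw) 2).ne').comp_hasFDerivAt w
    (hasStrictFDerivAt_norm_sq w).hasFDerivAt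
  simp only [Function.comp_def, Real.sqrt_sq (norm_nonneg _)] at hsqrt
  refine hsqrt.congr_fderiv ?_
  ext v
  have : ‖w‖ ≠ 0 := norm_ne_zero_iff.2 hw
  simp only [one_div, _root_.mul_inv_rev, _root_.smul_apply, coe_innerSL_apply, nsmul_eq_mul,
    Nat.cast_ofNat, smul_eq_mul]
  field_simp

theorem hasDerivAt_F {r : ℝ} (hr : 1 + r ≠ 0) : HasDerivAt F ((1 + r) ^ 2)⁻¹ r := by
  refine ((hasDerivAt_id' r).div ((hasDerivAt_id' r).const_add 1) hr).congr_deriv ?_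
  field_simp
  ring

theorem hasFDerivAt_F_norm {w : E} (hw : w ≠ 0) :
    HasFDerivAt (fun y : E => F ‖y‖) ((‖w‖ * (1 + ‖w‖) ^ 2)⁻¹ • innerSL ℝ w) w := by
  refine ((hasDerivAt_F (by positivity)).comp_hasFDerivAt w
    (hasFDerivAt_norm_of_ne_zero hw)).congr_fderiv ?_
  rw [smul_smul, mul_inv, mul_comm]

theorem hasDerivAt_inv_mul_one_add_sq {r : ℝ} (hr : 0 < r) :
    HasDerivAt (fun t : ℝ => (t * (1 + t) ^ 2)⁻¹) (-(1 + 3 * r) / (r ^ 2 * (1 + r) ^ 3)) r := by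
  have h := ((hasDerivAt_id' r).fun_mul (((hasDerivAt_id' r).const_add 1).fun_pow 2)).fun_inv
    (by positivity)
  refine h.congr_deriv ?_
  field_simp
  ring

theorem fderiv_fderiv_F_norm_apply {w : E} (hw : w ≠ 0) (u v : E) :
    fderiv ℝ (fderiv ℝ fun y : E => F ‖y‖) w u v =
      (‖w‖ * (1 + ‖w‖) ^ 2)⁻¹ * ⟪u, v⟫ -
        (1 + 3 * ‖w‖) / (‖w‖ ^ 3 * (1 + ‖w‖) ^ 3) * (⟪w, u⟫ * ⟪w, v⟫) := by
  have hfderiv : fderiv ℝ (fun y : E => F ‖y‖) =ᶠ[nhds w]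
      fun y => (‖y‖ * (1 + ‖y‖) ^ 2)⁻¹ • innerSL ℝ y := by
    filter_upwards [isOpen_compl_singleton.mem_nhds hw] with y hy
    exact (hasFDerivAt_F_norm hy).fderiv
  have hcoef := (hasDerivAt_inv_mul_one_add_sq (norm_pos_iff.2 hw)).comp_hasFDerivAt w
    (hasFDerivAt_norm_of_ne_zero hw)
  have hD : HasFDerivAt (fun y : E => (‖y‖ * (1 + ‖y‖) ^ 2)⁻¹ • innerSL ℝ y) _ w :=
    hcoef.fun_smul (innerSL ℝ (E := E)).hasFDerivAt
  rw [hfderiv.fderiv_eq, hD.fderiv]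
  have : ‖w‖ ≠ 0 := norm_ne_zero_iff.2 hw
  simp only [_root_.mul_inv_rev, Function.comp_apply, _root_.add_apply, _root_.smul_apply,
    ContinuousLinearMap.smulRight_apply, coe_innerSL_apply, smul_eq_mul]
  field_simp
  rw [innerSL_apply_apply]
  ring

theorem gradient_F_norm [CompleteSpace E] {w : E} (hw : w ≠ 0) :
    gradient (fun y : E => F ‖y‖) w = (‖w‖ * (1 + ‖w‖) ^ 2)⁻¹ • w := by
  refine HasGradientAt.gradient ?_
  rw [hasGradientAt_iff_hasFDerivAt]
  refine (hasFDerivAt_F_norm hw).congr_fderiv ?_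
  ext v
  simp

theorem F_norm_add_sub_sub_inner_eq {w : E} (hw : w ≠ 0) (v : E) :
    F ‖w + v‖ - F ‖w‖ - ⟪(‖w‖ * (1 + ‖w‖) ^ 2)⁻¹ • w, v⟫ =
      (‖v‖ ^ 2 - (‖w + v‖ - ‖w‖) ^ 2 - 2 * ‖w‖ * (‖w + v‖ - ‖w‖) ^ 2 / (1 + ‖w + v‖)) /
        (2 * ‖w‖ * (1 + ‖w‖) ^ 2) := by
  have hw' : ‖w‖ ≠ 0 := norm_ne_zero_iff.2 hw
  have hinner : ⟪w, v⟫ = (‖w + v‖ ^ 2 - ‖w‖ ^ 2 - ‖v‖ ^ 2) / 2 := by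
    rw [norm_add_sq_real]; ring
  have : 1 + ‖w + v‖ ≠ 0 := by positivity
  rw [real_inner_smul_left, hinner, F, F]
  field_simp
  ring

theorem F_norm_add_sub_sub_inner_le {w : E} (hw : w ≠ 0) (v : E) :
    F ‖w + v‖ - F ‖w‖ - ⟪(‖w‖ * (1 + ‖w‖) ^ 2)⁻¹ • w, v⟫ ≤
      min (‖v‖ ^ 2) (4 * ‖w‖ * ‖v‖) / (2 * ‖w‖ * (1 + ‖w‖) ^ 2) := by
  rw [F_norm_add_sub_sub_inner_eq hw]
  gcongr
  have := sq_sub_sq_le_min (norm_nonneg w) (by simpa using abs_norm_sub_norm_le (w + v) w)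
    (by simpa using norm_sub_le (w + v) w)
  have : 0 ≤ 2 * ‖w‖ * (‖w + v‖ - ‖w‖) ^ 2 / (1 + ‖w + v‖) := by positivity
  linarith

theorem abs_F_norm_add_sub_sub_inner_le {w : E} (hw : w ≠ 0) (v : E) :
    |F ‖w + v‖ - F ‖w‖ - ⟪(‖w‖ * (1 + ‖w‖) ^ 2)⁻¹ • w, v⟫| ≤
      (1 + 2 * ‖w‖) * min (‖v‖ ^ 2) (4 * ‖w‖ * ‖v‖) / (2 * ‖w‖ * (1 + ‖w‖) ^ 2) := by
  have hsr : |‖w + v‖ - ‖w‖| ≤ ‖v‖ := by simpa using abs_norm_sub_norm_le (w + v) w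
  have hup := sq_sub_sq_le_min (norm_nonneg w) hsr (by simpa using norm_sub_le (w + v) w)
  have hq := sq_mul_div_le_min (norm_nonneg w) (norm_nonneg (w + v)) hsr
  have hq0 : 0 ≤ 2 * ‖w‖ * (‖w + v‖ - ‖w‖) ^ 2 / (1 + ‖w + v‖) := by positivity
  have hsq : (‖w + v‖ - ‖w‖) ^ 2 ≤ ‖v‖ ^ 2 := sq_le_sq' (abs_le.1 hsr).1 (abs_le.1 hsr).2
  have hm : min (‖v‖ ^ 2) (4 * ‖w‖ * ‖v‖) ≤ (1 + 2 * ‖w‖) * min (‖v‖ ^ 2) (4 * ‖w‖ * ‖v‖) :=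
    le_mul_of_one_le_left (by positivity) (by linarith [norm_nonneg w])
  rw [F_norm_add_sub_sub_inner_eq hw, abs_div,
    abs_of_pos (by positivity : 0 < 2 * ‖w‖ * (1 + ‖w‖) ^ 2)]
  gcongr
  rw [abs_le]
  constructor <;> linarith

theorem integrable_F_norm_add_sub_sub_inner [MeasurableSpace E] [OpensMeasurableSpace E]
    {U : Type*} [MeasurableSpace U] {ν : Measure U} {w : E} (hw : w ≠ 0) {v : U → E}
    (hv : Measurable v) (hm : Integrable (fun u => min (‖v u‖ ^ 2) (4 * ‖w‖ * ‖v u‖)) ν) :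
    Integrable (fun u => F ‖w + v u‖ - F ‖w‖ - ⟪(‖w‖ * (1 + ‖w‖) ^ 2)⁻¹ • w, v u⟫) ν := by
  have hcont : Continuous fun y : E => F ‖w + y‖ - F ‖w‖ - ⟪(‖w‖ * (1 + ‖w‖) ^ 2)⁻¹ • w, y⟫ := by
    unfold F
    fun_prop (disch := intros; positivity)
  refine ((hm.const_mul (1 + 2 * ‖w‖)).div_const (2 * ‖w‖ * (1 + ‖w‖) ^ 2)).mono'
    (hcont.measurable.comp hv).aestronglyMeasurable (ae_of_all _ fun u => ?_)
  simpa only [Real.norm_eq_abs, mul_div_assoc] using abs_F_norm_add_sub_sub_inner_le hw (v u)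

theorem integral_F_norm_add_sub_sub_inner_le [MeasurableSpace E] [OpensMeasurableSpace E]
    {U : Type*} [MeasurableSpace U] {ν : Measure U} {w : E} (hw : w ≠ 0) {v : U → E}
    (hv : Measurable v) (hm : Integrable (fun u => min (‖v u‖ ^ 2) (4 * ‖w‖ * ‖v u‖)) ν) :
    ∫ u, (F ‖w + v u‖ - F ‖w‖ - ⟪(‖w‖ * (1 + ‖w‖) ^ 2)⁻¹ • w, v u⟫) ∂ν ≤
      (∫ u, min (‖v u‖ ^ 2) (4 * ‖w‖ * ‖v u‖) ∂ν) / (2 * ‖w‖ * (1 + ‖w‖) ^ 2) := by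
  rw [← integral_div]
  exact integral_mono (integrable_F_norm_add_sub_sub_inner hw hv hm) (hm.div_const _)
    fun u => F_norm_add_sub_sub_inner_le hw (v u)

end InnerProductSpace

theorem Matrix.PosSemidef.trace_mul_smul_one_sub_smul_vecMulVec_le {n : Type*} [Fintype n]
    [DecidableEq n] {M : Matrix n n ℝ} (hM : M.PosSemidef) (a : ℝ) {b : ℝ} (hb : 0 ≤ b)
    (x : n → ℝ) :
    trace (M * (a • 1 - b • vecMulVec x x)) ≤ a * trace M := by
  have hx : 0 ≤ trace (M * vecMulVec x x) := by
    rw [mul_vecMulVec, trace_vecMulVec, dotProduct_comm]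
    simpa using hM.dotProduct_mulVec_nonneg x
  rw [mul_sub, trace_sub, mul_smul_comm, mul_smul_comm, mul_one, trace_smul, trace_smul,
    smul_eq_mul, smul_eq_mul]
  nlinarith

section Euclidean

variable {d : ℕ}

theorem gradG_eq {w : EuclideanSpace ℝ (Fin d)} (hw : w ≠ 0) :
    gradG d w = (‖w‖ * (1 + ‖w‖) ^ 2)⁻¹ • w :=
  gradient_F_norm hw

theorem hessG_eq {w : EuclideanSpace ℝ (Fin d)} (hw : w ≠ 0) :
    hessG d w = (‖w‖ * (1 + ‖w‖) ^ 2)⁻¹ • (1 : Matrix (Fin d) (Fin d) ℝ) -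
      ((1 + 3 * ‖w‖) / (‖w‖ ^ 3 * (1 + ‖w‖) ^ 3)) • vecMulVec w w := by
  ext i j
  rw [hessG, of_apply, show G d = fun y => F ‖y‖ from rfl, iteratedFDeriv_two_apply]
  simp only [Matrix.cons_val_zero, Matrix.cons_val_one]
  rw [fderiv_fderiv_F_norm_apply hw]
  simp [EuclideanSpace.inner_single_right, one_apply, vecMulVec_apply, eq_comm]

theorem trace_mul_transpose_mul_hessG_le {w : EuclideanSpace ℝ (Fin d)} (hw : w ≠ 0)
    (A : Matrix (Fin d) (Fin d) ℝ) :
    trace (A * Aᵀ * hessG d w) ≤ (‖w‖ * (1 + ‖w‖) ^ 2)⁻¹ * ∑ i, ∑ j, A i j ^ 2 := by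
  have h := (posSemidef_self_mul_conjTranspose A).trace_mul_smul_one_sub_smul_vecMulVec_le
    (‖w‖ * (1 + ‖w‖) ^ 2)⁻¹ (by positivity : 0 ≤ (1 + 3 * ‖w‖) / (‖w‖ ^ 3 * (1 + ‖w‖) ^ 3)) w
  rw [conjTranspose_eq_transpose_of_trivial, ← hessG_eq hw] at h
  convert h using 2
  simp [trace, mul_apply, sq]

end Euclidean

theorem stmt_8_general (d : ℕ)
    {U : Type*} [MeasurableSpace U] (ν : Measure U)
    (δ₀ R κ : ℝ) (hκ : 0 < κ)
    (ϱ : ℝ → ℝ)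
    (hϱF : ∀ r : ℝ, 0 < r → ϱ r ≤ (1 + r) ^ 2 * ϱ (r / (1 + r)))
    (b : EuclideanSpace ℝ (Fin d) → EuclideanSpace ℝ (Fin d))
    (σ : EuclideanSpace ℝ (Fin d) → Matrix (Fin d) (Fin d) ℝ)
    (c : EuclideanSpace ℝ (Fin d) → U → EuclideanSpace ℝ (Fin d))
    (hmeas : ∀ x, Measurable (c x))
    (hcoef : ∀ x z : EuclideanSpace ℝ (Fin d), max ‖x‖ ‖z‖ ≤ R → ‖x - z‖ ≤ δ₀ →
      Integrable (fun u =>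
        min (‖c x u - c z u‖ ^ 2) (4 * ‖x - z‖ * ‖c x u - c z u‖)) ν ∧
      (∫ u, min (‖c x u - c z u‖ ^ 2) (4 * ‖x - z‖ * ‖c x u - c z u‖) ∂ν) +
        2 * ⟪x - z, b x - b z⟫ + (∑ i, ∑ j, (σ x i j - σ z i j) ^ 2) ≤
        2 * κ * ‖x - z‖ * ϱ ‖x - z‖) :
    ∀ x z : EuclideanSpace ℝ (Fin d), max ‖x‖ ‖z‖ ≤ R → ‖x - z‖ ≤ δ₀ → x ≠ z →
      Integrable (fun u => G d (x - z + c x u - c z u) - G d (x - z) -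
        ⟪gradG d (x - z), c x u - c z u⟫) ν ∧
      (1 / 2) * Matrix.trace ((σ x - σ z) * (σ x - σ z)ᵀ * hessG d (x - z)) +
        ⟪b x - b z, gradG d (x - z)⟫ +
        (∫ u, (G d (x - z + c x u - c z u) - G d (x - z) -
          ⟪gradG d (x - z), c x u - c z u⟫) ∂ν) ≤
        κ * ϱ (F ‖x - z‖) := by
  intro x z hxz hδ hne
  obtain ⟨hm, hcoef⟩ := hcoef x z hxz hδ
  set w := x - z
  have hw : w ≠ 0 := sub_ne_zero.mpr hne
  have hr : 0 < ‖w‖ := norm_pos_iff.2 hw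
  have hv : Measurable fun u => c x u - c z u := (hmeas x).sub (hmeas z)
  have hintegrand : ∀ u, G d (w + c x u - c z u) - G d w - ⟪gradG d w, c x u - c z u⟫ =
      F ‖w + (c x u - c z u)‖ - F ‖w‖ - ⟪(‖w‖ * (1 + ‖w‖) ^ 2)⁻¹ • w, c x u - c z u⟫ := by
    intro u
    rw [gradG_eq hw, add_sub_assoc]
    rfl
  simp only [hintegrand]
  refine ⟨integrable_F_norm_add_sub_sub_inner hw hv hm, ?_⟩
  have hjump := integral_F_norm_add_sub_sub_inner_le hw hv hm
  have hdiff := trace_mul_transpose_mul_hessG_le hw (σ x - σ z)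
  have hdrift : ⟪b x - b z, gradG d w⟫ = (‖w‖ * (1 + ‖w‖) ^ 2)⁻¹ * ⟪w, b x - b z⟫ := by
    rw [gradG_eq hw, real_inner_smul_right, real_inner_comm]
  simp only [Matrix.sub_apply] at hdiff
  calc _ ≤ (‖w‖ * (1 + ‖w‖) ^ 2)⁻¹ / 2 *
          ((∫ u, min (‖c x u - c z u‖ ^ 2) (4 * ‖w‖ * ‖c x u - c z u‖) ∂ν) +
            2 * ⟪w, b x - b z⟫ + ∑ i, ∑ j, (σ x i j - σ z i j) ^ 2) := by
        have hdiv : ∀ I : ℝ, I / (2 * ‖w‖ * (1 + ‖w‖) ^ 2) = (‖w‖ * (1 + ‖w‖) ^ 2)⁻¹ / 2 * I :=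
          fun I => by field_simp
        rw [hdrift]
        linarith [hdiv (∫ u, min (‖c x u - c z u‖ ^ 2) (4 * ‖w‖ * ‖c x u - c z u‖) ∂ν)]
    _ ≤ (‖w‖ * (1 + ‖w‖) ^ 2)⁻¹ / 2 * (2 * κ * ‖w‖ * ϱ ‖w‖) := by gcongr
    _ = κ * ϱ ‖w‖ / (1 + ‖w‖) ^ 2 := by field_simp
    _ ≤ κ * ϱ (F ‖w‖) := by
        rw [div_le_iff₀ (by positivity), F]
        nlinarith [mul_le_mul_of_nonneg_left (hϱF _ hr) hκ.le]

theorem stmt_8 (d : ℕ) (hd : 2 ≤ d)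
    {U : Type*} [MeasurableSpace U] (ν : Measure U) [SigmaFinite ν]
    (δ₀ R κ : ℝ) (hδ₀ : 0 < δ₀) (hR : 0 < R) (hκ : 0 < κ)
    (ϱ : ℝ → ℝ) (hϱc : ContinuousOn ϱ (Set.Ici 0)) (hϱm : MonotoneOn ϱ (Set.Ici 0))
    (hϱconc : ConcaveOn ℝ (Set.Ici 0) ϱ) (hϱnn : ∀ r : ℝ, 0 ≤ r → 0 ≤ ϱ r)
    (hϱpos : ∀ r : ℝ, 0 < r → 0 < ϱ r)
    (hϱF : ∀ r : ℝ, 0 < r → ϱ r ≤ (1 + r) ^ 2 * ϱ (r / (1 + r)))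
    (b : EuclideanSpace ℝ (Fin d) → EuclideanSpace ℝ (Fin d))
    (σ : EuclideanSpace ℝ (Fin d) → Matrix (Fin d) (Fin d) ℝ)
    (c : EuclideanSpace ℝ (Fin d) → U → EuclideanSpace ℝ (Fin d))
    (hmeas : ∀ x, Measurable (c x))
    (hcoef : ∀ x z : EuclideanSpace ℝ (Fin d), max ‖x‖ ‖z‖ ≤ R → ‖x - z‖ ≤ δ₀ →
      Integrable (fun u =>
        min (‖c x u - c z u‖ ^ 2) (4 * ‖x - z‖ * ‖c x u - c z u‖)) ν ∧
      (∫ u, min (‖c x u - c z u‖ ^ 2) (4 * ‖x - z‖ * ‖c x u - c z u‖) ∂ν) +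
        2 * ⟪x - z, b x - b z⟫ + (∑ i, ∑ j, (σ x i j - σ z i j) ^ 2) ≤
        2 * κ * ‖x - z‖ * ϱ ‖x - z‖) :
    ∀ x z : EuclideanSpace ℝ (Fin d), max ‖x‖ ‖z‖ ≤ R → ‖x - z‖ ≤ δ₀ → x ≠ z →
      Integrable (fun u => G d (x - z + c x u - c z u) - G d (x - z) -
        ⟪gradG d (x - z), c x u - c z u⟫) ν ∧
      (1 / 2) * Matrix.trace ((σ x - σ z) * (σ x - σ z)ᵀ * hessG d (x - z)) +
        ⟪b x - b z, gradG d (x - z)⟫ +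
        (∫ u, (G d (x - z + c x u - c z u) - G d (x - z) -
          ⟪gradG d (x - z), c x u - c z u⟫) ∂ν) ≤
        κ * ϱ (F ‖x - z‖) :=
  stmt_8_general d ν δ₀ R κ hκ ϱ hϱF b σ c hmeas hcoef
end

section
/- Let F(r) = r/(1+r) for r ≥ 0, with F'(r) = 1/(1+r)². Let (U, 𝔘) be a measurable space with a σ-finite measure ν, and let c : ℝ × U → ℝ be such that u ↦ c(x,u) is measurable for each x and the map x ↦ x + c(x,u) is nondecreasing for every u ∈ U. Then for all x, z ∈ ℝ with x ≠ z, the function u ↦ F(|x−z+c(x,u)−c(z,u)|) − F(|x−z|) − F'(|x−z|)·sgn(x−z)·(c(x,u)−c(z,u)) is nonpositive for every u ∈ U; in particular ∫_U [ F(|x−z+c(x,u)−c(z,u)|) − F(|x−z|) − F'(|x−z|)·sgn(x−z)·(c(x,u)−c(z,u)) ] ν(du) ≤ 0. -/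
open MeasureTheory

/-- `sgn a = 1` if `a > 0` and `-1` if `a ≤ 0`. -/
noncomputable def sgn (a : ℝ) : ℝ := if 0 < a then 1 else -1

lemma key_ineq (r s : ℝ) (hr : 0 ≤ r) (hrs : 0 ≤ r + s) :
    F (r + s) - F r - 1 / (1 + r) ^ 2 * s ≤ 0 := by
  have h1 : (0:ℝ) < 1 + r := by linarith
  have h2 : (0:ℝ) < 1 + (r + s) := by linarith
  have heq : F (r + s) - F r - 1 / (1 + r) ^ 2 * s
      = -(s ^ 2) / ((1 + r) ^ 2 * (1 + (r + s))) := by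
    unfold F
    field_simp
    ring
  rw [heq]
  apply div_nonpos_of_nonpos_of_nonneg
  · nlinarith [sq_nonneg s]
  · positivity

theorem stmt_11 {U : Type*} [MeasurableSpace U] (ν : Measure U) [SigmaFinite ν]
    (c : ℝ → U → ℝ) (hmeas : ∀ x : ℝ, Measurable (c x))
    (hmono : ∀ u : U, Monotone fun x : ℝ => x + c x u) :
    ∀ x z : ℝ, x ≠ z →
      (∀ u : U, F |x - z + c x u - c z u| - F |x - z| -
        (1 / (1 + |x - z|) ^ 2) * sgn (x - z) * (c x u - c z u) ≤ 0) ∧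
      (∫ u, (F |x - z + c x u - c z u| - F |x - z| -
        (1 / (1 + |x - z|) ^ 2) * sgn (x - z) * (c x u - c z u)) ∂ν) ≤ 0 := by
  intro x z hxz
  have hpt : ∀ u : U, F |x - z + c x u - c z u| - F |x - z| -
      (1 / (1 + |x - z|) ^ 2) * sgn (x - z) * (c x u - c z u) ≤ 0 := by
    intro u
    rcases lt_or_gt_of_ne hxz with h | h
    · -- x < z
      have hm : x + c x u ≤ z + c z u := hmono u (le_of_lt h)
      have hs : sgn (x - z) = -1 := by
        simp [sgn, not_lt.mpr (le_of_lt (sub_neg.mpr h))]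
      have h1 : |x - z| = z - x := by rw [abs_of_neg (by linarith)]; ring
      have h2 : |x - z + c x u - c z u| = (z - x) + (c z u - c x u) := by
        rw [abs_of_nonpos (by linarith)]; ring
      rw [hs, h1, h2]
      have := key_ineq (z - x) (c z u - c x u) (by linarith) (by linarith)
      linarith
    · -- x > z
      have hm : z + c z u ≤ x + c x u := hmono u (le_of_lt h)
      have hs : sgn (x - z) = 1 := by simp [sgn, sub_pos.mpr h]
      have h1 : |x - z| = x - z := abs_of_pos (by linarith)
      have h2 : |x - z + c x u - c z u| = (x - z) + (c x u - c z u) := by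
        rw [abs_of_nonneg (by linarith)]; ring
      rw [hs, h1, h2]
      have := key_ineq (x - z) (c x u - c z u) (by linarith) (by linarith)
      linarith
  exact ⟨hpt, integral_nonpos hpt⟩
end

section
/- Let ϱ : [0,∞) → [0,∞) be continuous and nondecreasing with ϱ(r) > 0 for all r > 0 and ∫_0^1 dr/ϱ(r) = ∞ (the Lebesgue integral over (0,1] of 1/ϱ diverges). Let T > 0, κ ≥ 0, and let u : [0,T] → [0,∞) be continuous with u(t) ≤ κ·∫_0^t ϱ(u(s)) ds for every t ∈ [0,T]. Then u(t) = 0 for all t ∈ [0,T]. -/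
open MeasureTheory intervalIntegral

/-!
Compare `u` with the majorant `v t = κ * ∫ s in 0..t, ϱ (u s)`, which satisfies `v 0 = 0` and
`0 ≤ v' ≤ κ ϱ(v)`. If `v t₁ > 0`, choose `ε ∈ (0, v t₁]` and `t₀` with `v t₀ = ε`; the substitution
`r = v t` gives `∫ r in ε..v t₁, 1 / ϱ r ≤ κ (t₁ - t₀) ≤ κ T`. By the Osgood condition the left
side is unbounded as `ε → 0⁺`, a contradiction.
-/

open Set Filter Topology
open scoped Interval

theorem tendsto_intervalIntegral_nhdsGT_atTop_of_lintegral_eq_top {f : ℝ → ℝ} {a b : ℝ}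
    (hfc : ContinuousOn f (Ioc a b)) (hf₀ : ∀ x ∈ Ioc a b, 0 ≤ f x)
    (hdiv : ∫⁻ x in Ioc a b, ENNReal.ofReal (f x) = ⊤) :
    Tendsto (fun ε => ∫ x in ε..b, f x) (𝓝[>] a) atTop := by
  have hlim := (aecover_Ioc_of_Ioc (μ := volume) (l := 𝓝[>] a) (a := fun x => x) (b := fun _ => b)
    nhdsWithin_le_nhds tendsto_const_nhds).lintegral_tendsto_of_countably_generated
    (hfc.aemeasurable measurableSet_Ioc).ennreal_ofReal
  rw [hdiv] at hlim
  refine tendsto_atTop.2 fun M => ?_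
  filter_upwards [hlim.eventually_const_lt (ENNReal.ofReal_lt_top (r := M)), self_mem_nhdsWithin]
    with ε hM (haε : a < ε)
  rcases le_or_gt b ε with hbε | hεb
  · simp [Ioc_eq_empty_of_le hbε] at hM
  have hsub : Ioc ε b ⊆ Ioc a b := Ioc_subset_Ioc_left haε.le
  have hint : IntegrableOn f (Ioc ε b) :=
    ((hfc.mono ((Icc_subset_Ioc_iff hεb.le).2 ⟨haε, le_rfl⟩)).integrableOn_Icc).mono_set
      Ioc_subset_Icc_self
  rw [Measure.restrict_restrict_of_subset hsub, ← ofReal_integral_eq_lintegral_ofReal hint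
    ((ae_restrict_mem measurableSet_Ioc).mono fun x hx => hf₀ x (hsub hx)),
    ENNReal.ofReal_lt_ofReal_iff'] at hM
  rw [integral_of_le hεb.le]
  exact hM.1.le

theorem integral_inv_le_mul_sub_of_hasDerivAt_le {ϱ v v' : ℝ → ℝ} {a b κ : ℝ} (hab : a ≤ b)
    (hv : ∀ t ∈ Icc a b, HasDerivAt v (v' t) t) (hv'₀ : ∀ t ∈ Icc a b, 0 ≤ v' t)
    (hϱ : ∀ t ∈ Icc a b, 0 < ϱ (v t)) (hle : ∀ t ∈ Icc a b, v' t ≤ κ * ϱ (v t)) :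
    ∫ r in v a..v b, (ϱ r)⁻¹ ≤ κ * (b - a) := by
  have hIoo : Ioo (min a b) (max a b) ⊆ Icc a b := by
    rw [min_eq_left hab, max_eq_right hab]; exact Ioo_subset_Icc_self
  rw [← integral_comp_mul_deriv_of_deriv_nonneg (g := fun r => (ϱ r)⁻¹)
    (fun t ht => (hv t (by rwa [uIcc_of_le hab] at ht)).continuousAt.continuousWithinAt)
    (fun t ht => hv t (hIoo ht)) (fun t ht => hv'₀ t (hIoo ht))]
  have hbound : ∀ t ∈ Ι a b, ‖(ϱ (v t))⁻¹ * v' t‖ ≤ κ := by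
    intro t ht
    rw [uIoc_of_le hab] at ht
    have ht' := Ioc_subset_Icc_self ht
    rw [Real.norm_of_nonneg (mul_nonneg (inv_nonneg.2 (hϱ t ht').le) (hv'₀ t ht')),
      inv_mul_le_iff₀' (hϱ t ht')]
    exact hle t ht'
  calc _ ≤ ‖∫ t in a..b, (ϱ (v t))⁻¹ * v' t‖ := Real.le_norm_self _
    _ ≤ κ * |b - a| := norm_integral_le_of_norm_le_const hbound
    _ = κ * (b - a) := by rw [abs_of_nonneg (sub_nonneg.2 hab)]

theorem exists_lt_integral_inv_of_lintegral_eq_top {ϱ : ℝ → ℝ} (hϱc : ContinuousOn ϱ (Ioi 0))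
    (hϱpos : ∀ r, 0 < r → 0 < ϱ r)
    (hdiv : ∫⁻ r in Ioc (0 : ℝ) 1, ENNReal.ofReal (ϱ r)⁻¹ = ⊤) {c : ℝ} (hc : 0 < c) (M : ℝ) :
    ∃ ε ∈ Ioc 0 c, M < ∫ r in ε..c, (ϱ r)⁻¹ := by
  have hinv : ContinuousOn (fun r => (ϱ r)⁻¹) (Ioi 0) := hϱc.inv₀ fun r hr => (hϱpos r hr).ne'
  have hint : ∀ {x y : ℝ}, 0 < x → 0 < y → IntervalIntegrable (fun r => (ϱ r)⁻¹) volume x y :=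
    fun hx hy => (hinv.mono fun _ hr => (lt_min hx hy).trans_le hr.1).intervalIntegrable
  have hlim := tendsto_intervalIntegral_nhdsGT_atTop_of_lintegral_eq_top
    (hinv.mono Ioc_subset_Ioi_self) (fun r hr => inv_nonneg.2 (hϱpos r hr.1).le) hdiv
  obtain ⟨ε, ⟨hε, hεc⟩, hM⟩ := (Eventually.and (Ioo_mem_nhdsGT hc)
    (hlim.eventually_gt_atTop (M + ∫ r in c..1, (ϱ r)⁻¹))).exists
  refine ⟨ε, ⟨hε, hεc.le⟩, ?_⟩
  linarith [integral_add_adjacent_intervals (hint hε hc) (hint hc one_pos)]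

theorem eq_zero_of_hasDerivAt_le_mul_comp {ϱ v v' : ℝ → ℝ} {T κ : ℝ}
    (hϱc : ContinuousOn ϱ (Ioi 0)) (hϱpos : ∀ r, 0 < r → 0 < ϱ r)
    (hdiv : ∫⁻ r in Ioc (0 : ℝ) 1, ENNReal.ofReal (ϱ r)⁻¹ = ⊤) (hκ : 0 ≤ κ)
    (hv : ∀ t ∈ Icc 0 T, HasDerivAt v (v' t) t) (hv0 : v 0 = 0)
    (hv'₀ : ∀ t ∈ Icc 0 T, 0 ≤ v' t) (hle : ∀ t ∈ Icc 0 T, v' t ≤ κ * ϱ (v t)) :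
    ∀ t ∈ Icc 0 T, v t = 0 := by
  have hcont : ContinuousOn v (Icc 0 T) := fun t ht => (hv t ht).continuousAt.continuousWithinAt
  have hmono : MonotoneOn v (Icc 0 T) :=
    monotoneOn_of_hasDerivWithinAt_nonneg (convex_Icc 0 T) hcont
      (fun t ht => (hv t (interior_subset ht)).hasDerivWithinAt)
      (fun t ht => hv'₀ t (interior_subset ht))
  intro t₁ ht₁
  refine le_antisymm (not_lt.1 fun hpos => ?_) (hv0 ▸ hmono ⟨le_rfl, ht₁.1.trans ht₁.2⟩ ht₁ ht₁.1)
  obtain ⟨ε, ⟨hε, hεv⟩, hM⟩ :=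
    exists_lt_integral_inv_of_lintegral_eq_top hϱc hϱpos hdiv hpos (κ * T)
  obtain ⟨t₀, ht₀, hvt₀⟩ := intermediate_value_Icc ht₁.1
    (hcont.mono (Icc_subset_Icc_right ht₁.2)) ⟨hv0.symm ▸ hε.le, hεv⟩
  have hsub : Icc t₀ t₁ ⊆ Icc 0 T := Icc_subset_Icc ht₀.1 ht₁.2
  have hvε : ∀ t ∈ Icc t₀ t₁, ε ≤ v t := fun t ht =>
    hvt₀ ▸ hmono (hsub ⟨le_rfl, ht₀.2⟩) (hsub ht) ht.1
  have hcomp := integral_inv_le_mul_sub_of_hasDerivAt_le ht₀.2 (fun t ht => hv t (hsub ht))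
    (fun t ht => hv'₀ t (hsub ht)) (fun t ht => hϱpos _ (hε.trans_le (hvε t ht)))
    (fun t ht => hle t (hsub ht))
  rw [hvt₀] at hcomp
  nlinarith [mul_le_mul_of_nonneg_left (by linarith [ht₀.1, ht₁.2] : t₁ - t₀ ≤ T) hκ]

theorem stmt_12 (ϱ : ℝ → ℝ) (hϱc : ContinuousOn ϱ (Set.Ici 0))
    (hϱm : MonotoneOn ϱ (Set.Ici 0)) (hϱnn : ∀ r : ℝ, 0 ≤ r → 0 ≤ ϱ r)
    (hϱpos : ∀ r : ℝ, 0 < r → 0 < ϱ r)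
    (hdiv : (∫⁻ r in Set.Ioc (0:ℝ) 1, ENNReal.ofReal (1 / ϱ r)) = ⊤)
    (T κ : ℝ) (hT : 0 < T) (hκ : 0 ≤ κ)
    (u : ℝ → ℝ) (hu : ContinuousOn u (Set.Icc 0 T))
    (hunn : ∀ t ∈ Set.Icc (0:ℝ) T, 0 ≤ u t)
    (hineq : ∀ t ∈ Set.Icc (0:ℝ) T, u t ≤ κ * ∫ s in (0:ℝ)..t, ϱ (u s)) :
    ∀ t ∈ Set.Icc (0:ℝ) T, u t = 0 := by
  set w : ℝ → ℝ := fun s => ϱ (u (projIcc 0 T hT.le s))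
  have hproj : ∀ s, (projIcc 0 T hT.le s : ℝ) ∈ Icc 0 T := fun s => (projIcc 0 T hT.le s).2
  have hw_nonneg : ∀ s, 0 ≤ w s := fun s => hϱnn _ (hunn _ (hproj s))
  have hw : Continuous w := hϱc.comp_continuous
    (hu.comp_continuous (continuous_subtype_val.comp continuous_projIcc) hproj)
    fun s => hunn _ (hproj s)
  have hwu : ∀ s ∈ Icc 0 T, w s = ϱ (u s) := fun s hs => by simp [w, projIcc_of_mem _ hs]
  set v : ℝ → ℝ := fun t => κ * ∫ s in 0..t, w s
  have hv : ∀ t, HasDerivAt v (κ * w t) t := fun t =>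
    (hw.integral_hasStrictDerivAt 0 t).hasDerivAt.const_mul κ
  have huv : ∀ t ∈ Icc 0 T, u t ≤ v t := by
    intro t ht
    have hwu' : EqOn w (fun s => ϱ (u s)) [[0, t]] := fun s hs =>
      hwu s (Icc_subset_Icc_right ht.2 (uIcc_of_le ht.1 ▸ hs))
    simpa only [v, integral_congr hwu'] using hineq t ht
  have hv_zero := eq_zero_of_hasDerivAt_le_mul_comp (hϱc.mono Ioi_subset_Ici_self) hϱpos
    (by simpa only [one_div] using hdiv) hκ (fun t _ => hv t) (by simp [v])
    (fun t _ => mul_nonneg hκ (hw_nonneg t))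
    (fun t ht => hwu t ht ▸ mul_le_mul_of_nonneg_left
      (hϱm (hunn t ht) ((hunn t ht).trans (huv t ht)) (huv t ht)) hκ)
  exact fun t ht => le_antisymm ((huv t ht).trans (hv_zero t ht).le) (hunn t ht)
end
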